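/- arXiv:1804.03823 — 8 statements merged into one kernel-verified Lean document; each statement's English description precedes it below -/
import Mathlib

section
/- Let b ≥ 1 and let F_x^{(1)}, …, F_x^{(b)} be SGICP fitting matrices, F_x^{(s)} of size n_s × m_s. Let F_x be an SGICP fitting matrix of size (Σ_s n_s) × (Σ_s m_s), partitioned into b × b blocks according to these sizes, whose s-th diagonal block is F_x^{(s)}, whose blocks strictly below the diagonal consist entirely of known zeros, and whose blocks strictly above the diagonal contain only unknowns and known zeros (so every receiver in row-block s demands a message in column-block s). Then mrk_q(F_x) = Σ_{s=1}^{b} mrk_q(F_x^{(s)}). -/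
open scoped Classical
open scoped Matrix

/-- `A ≈ F_x`: the matrix `A` completes the fitting matrix of the SGICP with demand map `f`
and side-information sets `χ`, i.e. `A` equals `1` at every demand entry and `0` at every
entry which is neither a demand entry nor a side-information entry. -/
def Completes {K : Type*} [Field K] {R M : Type*} (f : R → M) (χ : R → Set M)
    (A : Matrix R M K) : Prop :=
  (∀ i, A i (f i) = 1) ∧ ∀ i j, j ≠ f i → j ∉ χ i → A i j = 0

/-- `mrk_q(F_x)`: the minrank over `K` of the SGICP with demand map `f` and side
information `χ` — the minimum rank of a matrix completing its fitting matrix. -/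
noncomputable def minrk (K : Type*) [Field K] {R M : Type*} [Fintype M]
    (f : R → M) (χ : R → Set M) : ℕ :=
  sInf {r | ∃ A : Matrix R M K, Completes f χ A ∧ A.rank = r}

section Aux

variable {K : Type*} [Field K]

private lemma minrk_set_nonempty {R M : Type*} [Fintype M] (f : R → M) (χ : R → Set M) :
    {r | ∃ A : Matrix R M K, Completes f χ A ∧ A.rank = r}.Nonempty := by
  refine ⟨_, Matrix.of (fun i j => if j = f i then (1 : K) else 0),
    ⟨fun i => if_pos rfl, fun i j h1 _ => if_neg h1⟩, rfl⟩

private lemma minrk_le {R M : Type*} [Fintype M] (f : R → M) (χ : R → Set M)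
    (A : Matrix R M K) (hA : Completes f χ A) : minrk K f χ ≤ A.rank :=
  Nat.sInf_le ⟨A, hA, rfl⟩

private lemma le_minrk {R M : Type*} [Fintype M] (f : R → M) (χ : R → Set M)
    (n : ℕ) (h : ∀ A : Matrix R M K, Completes f χ A → n ≤ A.rank) : n ≤ minrk K f χ :=
  le_csInf (minrk_set_nonempty f χ) (by rintro r ⟨A, hA, rfl⟩; exact h A hA)

private lemma exists_minrk {R M : Type*} [Fintype M] (f : R → M) (χ : R → Set M) :
    ∃ A : Matrix R M K, Completes f χ A ∧ A.rank = minrk K f χ :=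
  Nat.sInf_mem (minrk_set_nonempty f χ)

private lemma rank_add_le' {R M : Type*} [Fintype R] [Fintype M] (A B : Matrix R M K) :
    (A + B).rank ≤ A.rank + B.rank := by
  have h : LinearMap.range (A + B).mulVecLin ≤
      LinearMap.range A.mulVecLin ⊔ LinearMap.range B.mulVecLin := by
    rw [Matrix.mulVecLin_add]
    rintro y ⟨x, rfl⟩
    exact Submodule.mem_sup.2 ⟨_, ⟨x, rfl⟩, _, ⟨x, rfl⟩, rfl⟩
  calc (A + B).rank
      ≤ Module.finrank K ↥(LinearMap.range A.mulVecLin ⊔ LinearMap.range B.mulVecLin) :=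
        Submodule.finrank_mono h
    _ ≤ A.rank + B.rank := Submodule.finrank_add_le_finrank_add_finrank _ _

private lemma rank_sum_le {R M ι : Type*} [Fintype R] [Fintype M] (t : Finset ι)
    (E : ι → Matrix R M K) : (∑ i ∈ t, E i).rank ≤ ∑ i ∈ t, (E i).rank := by
  induction t using Finset.cons_induction with
  | empty => simp
  | cons i t hi ih =>
      rw [Finset.sum_cons, Finset.sum_cons]
      exact (rank_add_le' _ _).trans (add_le_add_right ih _)

/-- block-triangular matrices: the sum of the ranks of the diagonal blocks is at most the
rank of the whole matrix. -/
private lemma sum_rank_le_rank {b : ℕ} {nn mm : Fin b → ℕ}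
    (A : Matrix (Σ s, Fin (nn s)) (Σ s, Fin (mm s)) K)
    (htri : ∀ (s t : Fin b) (k : Fin (nn s)) (j : Fin (mm t)),
      t < s → A ⟨s, k⟩ ⟨t, j⟩ = 0) :
    ∑ s, (Matrix.of fun k j => A ⟨s, k⟩ ⟨s, j⟩ : Matrix (Fin (nn s)) (Fin (mm s)) K).rank
      ≤ A.rank := by
  set D : ∀ s, Matrix (Fin (nn s)) (Fin (mm s)) K :=
    fun s => Matrix.of fun k j => A ⟨s, k⟩ ⟨s, j⟩ with hD
  have H : ∀ s, ∃ B : Set (Fin (nn s) → K), B.Finite ∧ B ⊆ Set.range (D s)ᵀ ∧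
      LinearIndependent K ((↑) : B → (Fin (nn s) → K)) ∧ (D s).rank = B.ncard := by
    intro s
    obtain ⟨B, hsub, hspan, hind⟩ := exists_linearIndependent K (Set.range (D s)ᵀ)
    have hfin : B.Finite := (Set.finite_range _).subset hsub
    refine ⟨B, hfin, hsub, hind, ?_⟩
    haveI := hfin.fintype
    rw [Matrix.rank_eq_finrank_span_cols]
    change Module.finrank K (Submodule.span K (Set.range (D s)ᵀ)) = _
    rw [← hspan, finrank_span_set_eq_card hind,
      Set.ncard_eq_toFinset_card']
  choose Bs hfin hsub hind hcard using H
  haveI : ∀ s, Fintype (Bs s) := fun s => (hfin s).fintype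
  choose c hc using fun s (v : Bs s) => hsub s v.2
  set w : (Σ s, Bs s) → ((Σ s, Fin (nn s)) → K) := fun i => Aᵀ ⟨i.1, c i.1 i.2⟩ with hw
  have hwind : LinearIndependent K w := by
    rw [Fintype.linearIndependent_iff]
    intro g hg
    by_contra hne
    push_neg at hne
    obtain ⟨i0, hi0⟩ := hne
    set S : Finset (Fin b) := Finset.univ.filter (fun s => ∃ v : Bs s, g ⟨s, v⟩ ≠ 0) with hS
    have hSne : S.Nonempty := by
      refine ⟨i0.1, ?_⟩
      simp only [hS, Finset.mem_filter, Finset.mem_univ, true_and]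
      exact ⟨i0.2, by rwa [Sigma.eta]⟩
    set s₀ := S.max' hSne with hs₀
    have hmax : ∀ s, s₀ < s → ∀ v : Bs s, g ⟨s, v⟩ = 0 := by
      intro s hlt v
      by_contra hv
      have hmem : s ∈ S := by
        simp only [hS, Finset.mem_filter, Finset.mem_univ, true_and]
        exact ⟨v, hv⟩
      exact absurd (S.le_max' s hmem) (not_le.2 hlt)
    have hrow : ∀ k : Fin (nn s₀), ∑ v : Bs s₀, g ⟨s₀, v⟩ * (v : Fin (nn s₀) → K) k = 0 := by
      intro k
      have h1 := congrFun hg ⟨s₀, k⟩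
      simp only [Finset.sum_apply, Pi.smul_apply, smul_eq_mul, Pi.zero_apply] at h1
      rw [← Finset.univ_sigma_univ, Finset.sum_sigma] at h1
      rw [Finset.sum_eq_single s₀] at h1
      · rw [← h1]
        refine Finset.sum_congr rfl fun v _ => ?_
        have : w ⟨s₀, v⟩ ⟨s₀, k⟩ = (v : Fin (nn s₀) → K) k := by
          have := congrFun (hc s₀ v) k
          simpa [hw, Matrix.transpose_apply, hD] using this
        rw [this]
      · intro s _ hne
        rcases lt_or_gt_of_ne hne with hlt | hgt
        · refine Finset.sum_eq_zero fun v _ => ?_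
          have h0 : w ⟨s, v⟩ ⟨s₀, k⟩ = 0 := by
            simpa [hw, Matrix.transpose_apply] using htri s₀ s k (c s v) hlt
          rw [h0, mul_zero]
        · refine Finset.sum_eq_zero fun v _ => by rw [hmax s hgt v, zero_mul]
      · intro h; exact absurd (Finset.mem_univ s₀) h
    have hsum0 : ∑ v : Bs s₀, g ⟨s₀, v⟩ • ((v : Bs s₀) : Fin (nn s₀) → K) = 0 := by
      funext k
      simpa [Finset.sum_apply] using hrow k
    have hall := Fintype.linearIndependent_iff.1 (hind s₀) _ hsum0
    have hs₀mem : s₀ ∈ S := S.max'_mem hSne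
    simp only [hS, Finset.mem_filter, Finset.mem_univ, true_and] at hs₀mem
    obtain ⟨v, hv⟩ := hs₀mem
    exact hv (hall v)
  calc ∑ s, (D s).rank = ∑ s, Fintype.card (Bs s) := by
        refine Finset.sum_congr rfl fun s _ => ?_
        rw [hcard s, Set.ncard_eq_toFinset_card', Set.toFinset_card]
    _ = Fintype.card (Σ s, Bs s) := by rw [Fintype.card_sigma]
    _ = Module.finrank K (Submodule.span K (Set.range w)) := (finrank_span_eq_card hwind).symm
    _ ≤ Module.finrank K (Submodule.span K (Set.range Aᵀ)) := by
        refine Submodule.finrank_mono (Submodule.span_le.2 ?_)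
        rintro _ ⟨i, rfl⟩
        exact Submodule.subset_span ⟨_, rfl⟩
    _ = A.rank := (Matrix.rank_eq_finrank_span_cols A).symm

end Aux

/-- Lemma 1, block upper triangular minrank.
Let `F_x^(s)` (`s ∈ [b]`, `b ≥ 1`) be SGICP fitting matrices, `F_x^(s)` of size `nn s × mm s`,
given by demand maps `f s` and side-information sets `χ s`.  Let `F_x` be the
`(Σ nn) × (Σ mm)` SGICP fitting matrix, partitioned into `b × b` blocks, with demand map
`⟨s, k⟩ ↦ ⟨s, f s k⟩` and side information `X`, whose `s`-th diagonal block is `F_x^(s)`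
(hypothesis `hdiag`), whose blocks strictly below the diagonal are all known zeros
(hypothesis `hlow`: no side information in blocks `t < s`), and whose blocks strictly above
the diagonal contain only unknowns and known zeros (no constraint).  Then
`mrk_q(F_x) = Σ_s mrk_q(F_x^(s))`. -/
theorem stmt0 (K : Type*) [Field K] [Fintype K]
    (b : ℕ) (hb : 1 ≤ b) (nn mm : Fin b → ℕ)
    (f : ∀ s, Fin (nn s) → Fin (mm s))
    (χ : ∀ s, Fin (nn s) → Set (Fin (mm s)))
    (hχ : ∀ s k, f s k ∉ χ s k)
    (X : (Σ s, Fin (nn s)) → Set (Σ s, Fin (mm s)))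
    (hdiag : ∀ s (k : Fin (nn s)) (j : Fin (mm s)),
      (⟨s, j⟩ : Σ s, Fin (mm s)) ∈ X ⟨s, k⟩ ↔ j ∈ χ s k)
    (hlow : ∀ (s t : Fin b) (k : Fin (nn s)) (j : Fin (mm t)),
      t < s → (⟨t, j⟩ : Σ s, Fin (mm s)) ∉ X ⟨s, k⟩) :
    minrk K (fun p : Σ s, Fin (nn s) => (⟨p.1, f p.1 p.2⟩ : Σ s, Fin (mm s))) X
      = ∑ s, minrk K (f s) (χ s) := by
  apply le_antisymm
  · -- upper bound: block diagonal completion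
    choose As hAc hAr using fun s => exists_minrk (K := K) (f s) (χ s)
    set P : ∀ s, Matrix (Σ t, Fin (nn t)) (Fin (nn s)) K :=
      fun s => Matrix.of fun p k => if p.1 = s ∧ (p.2 : ℕ) = (k : ℕ) then 1 else 0 with hP
    set Q : ∀ s, Matrix (Fin (mm s)) (Σ t, Fin (mm t)) K :=
      fun s => Matrix.of fun j q => if q.1 = s ∧ (q.2 : ℕ) = (j : ℕ) then 1 else 0 with hQ
    set B : Matrix (Σ s, Fin (nn s)) (Σ s, Fin (mm s)) K :=
      ∑ s, P s * As s * Q s with hB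
    have hterm : ∀ u s t (k : Fin (nn s)) (j : Fin (mm t)),
        (P u * As u * Q u) ⟨s, k⟩ ⟨t, j⟩ =
          if h : s = u ∧ t = u then As u (Fin.cast (by rw [h.1]) k) (Fin.cast (by rw [h.2]) j)
          else 0 := by
      intro u s t k j
      by_cases hs : s = u
      · subst hs
        by_cases ht : t = s
        · subst ht
          rw [dif_pos ⟨rfl, rfl⟩]
          simp [hP, hQ, Matrix.mul_apply, ite_and, Fin.val_eq_val,
            Finset.sum_ite_eq, Finset.sum_ite_eq']
        · rw [dif_neg (by tauto)]
          simp [hQ, Matrix.mul_apply, ht]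
      · rw [dif_neg (by tauto)]
        simp [hP, Matrix.mul_apply, hs]
    have hBdiag : ∀ s (k : Fin (nn s)) (j : Fin (mm s)), B ⟨s, k⟩ ⟨s, j⟩ = As s k j := by
      intro s k j
      rw [hB, Matrix.sum_apply]
      rw [Finset.sum_eq_single s]
      · rw [hterm s s s k j, dif_pos ⟨rfl, rfl⟩]; simp
      · intro u _ hne
        rw [hterm u s s k j, dif_neg (by tauto)]
      · intro h; exact absurd (Finset.mem_univ s) h
    have hBoff : ∀ s t (k : Fin (nn s)) (j : Fin (mm t)), s ≠ t → B ⟨s, k⟩ ⟨t, j⟩ = 0 := by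
      intro s t k j hst
      rw [hB, Matrix.sum_apply]
      refine Finset.sum_eq_zero fun u _ => ?_
      rw [hterm u s t k j, dif_neg (by rintro ⟨rfl, rfl⟩; exact hst rfl)]
    have hBc : Completes (fun p : Σ s, Fin (nn s) => (⟨p.1, f p.1 p.2⟩ : Σ s, Fin (mm s))) X B := by
      constructor
      · rintro ⟨s, k⟩
        rw [hBdiag s k (f s k)]
        exact (hAc s).1 k
      · rintro ⟨s, k⟩ ⟨t, j⟩ hne hX
        by_cases hst : s = t
        · subst hst
          rw [hBdiag s k j]
          refine (hAc s).2 k j ?_ ?_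
          · intro h; exact hne (by rw [h])
          · intro h; exact hX ((hdiag s k j).2 h)
        · exact hBoff s t k j hst
    calc minrk K (fun p : Σ s, Fin (nn s) => (⟨p.1, f p.1 p.2⟩ : Σ s, Fin (mm s))) X
        ≤ B.rank := minrk_le _ _ B hBc
      _ ≤ ∑ s, (P s * As s * Q s).rank := by rw [hB]; exact rank_sum_le _ _
      _ ≤ ∑ s, minrk K (f s) (χ s) := by
          refine Finset.sum_le_sum fun s _ => ?_
          rw [← hAr s]
          exact (Matrix.rank_mul_le_left _ _).trans (Matrix.rank_mul_le_right _ _)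
  · -- lower bound
    refine le_minrk _ _ _ fun A hA => ?_
    set D : ∀ s, Matrix (Fin (nn s)) (Fin (mm s)) K :=
      fun s => Matrix.of fun k j => A ⟨s, k⟩ ⟨s, j⟩ with hD
    have hDc : ∀ s, Completes (f s) (χ s) (D s) := by
      intro s
      constructor
      · intro k; exact hA.1 ⟨s, k⟩
      · intro k j hne hχ'
        refine hA.2 ⟨s, k⟩ ⟨s, j⟩ ?_ ?_
        · intro h
          exact hne (by simpa using h)
        · intro h; exact hχ' ((hdiag s k j).1 h)
    have htri : ∀ (s t : Fin b) (k : Fin (nn s)) (j : Fin (mm t)),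
        t < s → A ⟨s, k⟩ ⟨t, j⟩ = 0 := by
      intro s t k j hlt
      refine hA.2 ⟨s, k⟩ ⟨t, j⟩ ?_ (hlow s t k j hlt)
      intro h
      exact absurd (congrArg Sigma.fst h) (ne_of_lt hlt)
    calc ∑ s, minrk K (f s) (χ s) ≤ ∑ s, (D s).rank :=
          Finset.sum_le_sum fun s _ => minrk_le _ _ _ (hDc s)
      _ ≤ A.rank := sum_rank_le_rank A htri
end

section
/- If every receiver of the TGICP I whose demand lies in P_{12} has all of its side information inside P_{12} (i.e., χ_i ⊆ P_{12} whenever f(i) ∈ P_{12}; equivalently, neither the interaction I_{12} → I_1 nor I_{12} → I_2 exists — this covers Case II-A of the paper), then l*_q(I) = mrk_1 + mrk_2 + mrk_{12}, regardless of the other interactions and of whether they are fully- or partially-participated. -/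
open scoped Classical

/-- A two-sender groupcast index coding problem (TGICP) with `m` messages and `n` receivers.
Sender `j` holds the messages indexed by `Mj`, receiver `i` demands message `f i` and has
side information `χ i`; every message is demanded by at least one receiver. -/
structure TGICP (m n : ℕ) where
  /-- indices of the messages available at sender 1 -/
  M1 : Set (Fin m)
  /-- indices of the messages available at sender 2 -/
  M2 : Set (Fin m)
  cover : M1 ∪ M2 = Set.univ
  /-- demand map -/
  f : Fin n → Fin m
  /-- side-information sets -/
  χ : Fin n → Set (Fin m)
  not_mem : ∀ i, f i ∉ χ i
  surj : ∀ j, ∃ i, f i = j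

namespace TGICP

variable {m n : ℕ}

/-- `(G1, G2)` is a valid scalar linear two-sender index code over `K`: each receiver can
decode its demanded message from the two transmitted codewords together with its side
information. -/
def IsCode (I : TGICP m n) (K : Type*) [Field K] {l1 l2 : ℕ}
    (G1 : Matrix (Fin l1) ↥I.M1 K) (G2 : Matrix (Fin l2) ↥I.M2 K) : Prop :=
  ∀ i : Fin n, ∃ D : (Fin l1 → K) → (Fin l2 → K) → (↥(I.χ i) → K) → K,
    ∀ x : Fin m → K,
      D (G1.mulVec fun j => x j.1) (G2.mulVec fun j => x j.1) (fun j => x j.1) = x (I.f i)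

/-- `l*_q(I)`: the optimal (minimum) aggregate length of a scalar linear two-sender index
code for `I` over `K`. -/
noncomputable def optLen (I : TGICP m n) (K : Type*) [Field K] : ℕ :=
  sInf {L | ∃ (l1 l2 : ℕ) (G1 : Matrix (Fin l1) ↥I.M1 K) (G2 : Matrix (Fin l2) ↥I.M2 K),
    I.IsCode K G1 G2 ∧ L = l1 + l2}

/-- The minrank over `K` of the single-sender sub-problem of `I` with message set `P`:
its receivers are those demanding a message in `P`, with side information restricted
to `P`. -/
noncomputable def mrk (I : TGICP m n) (K : Type*) [Field K] (P : Set (Fin m)) : ℕ :=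
  minrk K (fun i : {i : Fin n // I.f i ∈ P} => (⟨I.f i.1, i.2⟩ : ↥P))
    (fun i => {j : ↥P | j.1 ∈ I.χ i.1})

end TGICP

section Helpers

open Module

variable {K : Type*} [Field K]

lemma exists_linear_comp {V W : Type*} [AddCommGroup V] [Module K V] [AddCommGroup W]
    [Module K W] (T : V →ₗ[K] W) (φ : V →ₗ[K] K) (g : W → K) (hg : ∀ x, g (T x) = φ x) :
    ∃ ψ : W →ₗ[K] K, ∀ x, ψ (T x) = φ x := by
  have hker : LinearMap.ker T ≤ LinearMap.ker φ := by
    intro x hx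
    have hTx : T x = T 0 := by simpa [map_zero] using (LinearMap.mem_ker.mp hx)
    have h1 := hg x
    have h2 := hg 0
    rw [hTx] at h1
    simp only [map_zero] at h2
    simp [LinearMap.mem_ker, ← h1, h2]
  set φ' : (V ⧸ LinearMap.ker T) →ₗ[K] K := (LinearMap.ker T).liftQ φ hker with hφ'
  set e := T.quotKerEquivRange with he
  obtain ⟨ψ, hψ⟩ := LinearMap.exists_extend
    (φ'.comp (e.symm : LinearMap.range T →ₗ[K] V ⧸ LinearMap.ker T))
  refine ⟨ψ, fun x => ?_⟩
  have hx : T x ∈ LinearMap.range T := ⟨x, rfl⟩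
  have h3 : ψ (T x) =
      (φ'.comp (e.symm : LinearMap.range T →ₗ[K] V ⧸ LinearMap.ker T)) ⟨T x, hx⟩ := by
    rw [← hψ]; rfl
  rw [h3]
  simp only [LinearMap.comp_apply, LinearEquiv.coe_coe]
  have hsym : e.symm ⟨T x, hx⟩ = (LinearMap.ker T).mkQ x :=
    T.quotKerEquivRange_symm_apply_image x hx
  rw [hsym, Submodule.mkQ_apply, hφ', Submodule.liftQ_apply]

lemma sum_subtype_dite {α : Type*} [Fintype α] {S : Set α} [Fintype ↥S] (g : ↥S → K) :
    ∑ j : ↥S, g j = ∑ j : α, if h : j ∈ S then g ⟨j, h⟩ else 0 := by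
  classical
  rw [← Finset.sum_filter_of_ne (s := Finset.univ) (p := (· ∈ S))
    (fun x _ hx => by by_contra hm; exact hx (dif_neg hm))]
  refine Finset.sum_bij' (fun (a : ↥S) _ => (a : α)) (fun a ha => ⟨a, by simpa using ha⟩)
    ?_ ?_ ?_ ?_ ?_
  · intro a _; simp [a.2]
  · intro a _; simp
  · intro a _; rfl
  · intro a _; rfl
  · intro a ha; simp [dif_pos a.2]

lemma psi_eq_sum {ι : Type*} [Fintype ι] [DecidableEq ι] (ψ : (ι → K) →ₗ[K] K) (w : ι → K) :
    ψ w = ∑ k, w k * ψ (Pi.single k 1) := by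
  conv_lhs => rw [pi_eq_sum_univ w, map_sum]
  refine Finset.sum_congr rfl fun k _ => ?_
  rw [map_smul, smul_eq_mul]
  congr 1
  congr 1
  ext j; by_cases hj : k = j <;> simp [Pi.single, Function.update, hj, eq_comm]

lemma finrank_split {α β : Type*} [Fintype α] [Fintype β] (V : Submodule K (α → K))
    (π : (α → K) →ₗ[K] (β → K)) :
    finrank K V = finrank K (V.map π) + finrank K ↥(V ⊓ LinearMap.ker π) := by
  have h := LinearMap.finrank_range_add_finrank_ker (π.domRestrict V)
  rw [LinearMap.range_domRestrict, LinearMap.ker_domRestrict] at h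
  rw [← h]
  congr 1
  rw [← Submodule.finrank_map_subtype_eq V ((LinearMap.ker π).comap V.subtype),
    Submodule.map_comap_subtype]

lemma matrix_rank_eq_finrank_span_rows {α β : Type*} [Fintype α] [Fintype β]
    (A : Matrix α β K) : A.rank = finrank K (Submodule.span K (Set.range A)) := by
  rw [← Matrix.rank_transpose, Matrix.rank_eq_finrank_span_cols]; rfl

lemma sum_restrict {m : ℕ} {S P : Set (Fin m)} [Fintype ↥S] [Fintype ↥P]
    [∀ j : Fin m, Decidable (j ∈ P)] (hPS : P ⊆ S) (g : ↥P → K) (x : Fin m → K) :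
    ∑ j : ↥S, (if h : j.1 ∈ P then g ⟨j.1, h⟩ else 0) * x j.1 = ∑ j : ↥P, g j * x j.1 := by
  rw [sum_subtype_dite (fun j : ↥S => (if h : j.1 ∈ P then g ⟨j.1, h⟩ else 0) * x j.1),
      sum_subtype_dite (fun j : ↥P => g j * x j.1)]
  refine Finset.sum_congr rfl fun j _ => ?_
  by_cases hp : j ∈ P
  · rw [dif_pos (hPS hp), dif_pos hp, dif_pos hp]
  · rw [dif_neg hp]
    by_cases hs : j ∈ S
    · rw [dif_pos hs, dif_neg hp, zero_mul]
    · rw [dif_neg hs]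

lemma decode_lemma {m n : ℕ} (f : Fin n → Fin m) (χ : Fin n → Set (Fin m))
    (hfχ : ∀ i, f i ∉ χ i) (P : Set (Fin m))
    (A : Matrix {i : Fin n // f i ∈ P} ↥P K)
    (hA : Completes (fun i => (⟨f i.1, i.2⟩ : ↥P)) (fun i => {j : ↥P | j.1 ∈ χ i.1}) A)
    (r : ℕ) (hr : Module.finrank K ↥(Submodule.span K (Set.range A)) = r) :
    ∃ E : Matrix (Fin r) ↥P K,
      ∀ i, ∀ hi : f i ∈ P,
        ∃ D : (Fin r → K) → (↥(χ i) → K) → K,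
          ∀ x : Fin m → K, ∀ y : Fin r → K,
            (∀ k, y k = ∑ j : ↥P, E k j * x j.1) →
            D y (fun j => x j.1) = x (f i) := by
  classical
  set RS : Submodule K (↥P → K) := Submodule.span K (Set.range A) with hRS
  set b : Basis (Fin r) K RS := Module.finBasisOfFinrankEq K RS hr with hb
  refine ⟨fun k j => (b k).1 j, fun i hi => ?_⟩
  have hrow : A ⟨i, hi⟩ ∈ RS := Submodule.subset_span ⟨⟨i, hi⟩, rfl⟩
  set c : Fin r →₀ K := b.repr ⟨A ⟨i, hi⟩, hrow⟩ with hc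
  have hsum : ∀ j : ↥P, ∑ k, c k * (b k).1 j = A ⟨i, hi⟩ j := by
    intro j
    have h1 : (∑ k, c k • b k) = (⟨A ⟨i, hi⟩, hrow⟩ : RS) := b.sum_repr _
    have h2 := congrFun (congrArg Subtype.val h1) j
    simpa [AddSubmonoidClass.coe_finset_sum, Finset.sum_apply, smul_eq_mul] using h2
  refine ⟨fun y s => (∑ k, c k * y k) -
      ∑ j : ↥P, if h : j.1 ∈ χ i then A ⟨i, hi⟩ j * s ⟨j.1, h⟩ else 0, fun x y hy => ?_⟩
  show (∑ k, c k * y k) - _ = x (f i)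
  simp only [hy]
  have h3 : (∑ k, c k * ∑ j : ↥P, (b k).1 j * x j.1)
      = ∑ j : ↥P, A ⟨i, hi⟩ j * x j.1 := by
    calc (∑ k, c k * ∑ j : ↥P, (b k).1 j * x j.1)
        = ∑ k, ∑ j : ↥P, c k * (b k).1 j * x j.1 := by
          refine Finset.sum_congr rfl fun k _ => ?_
          rw [Finset.mul_sum]
          exact Finset.sum_congr rfl fun j _ => (mul_assoc _ _ _).symm
      _ = ∑ j : ↥P, ∑ k, c k * (b k).1 j * x j.1 := Finset.sum_comm
      _ = ∑ j : ↥P, A ⟨i, hi⟩ j * x j.1 := by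
          refine Finset.sum_congr rfl fun j _ => ?_
          rw [← Finset.sum_mul, hsum]
  rw [h3, ← Finset.sum_sub_distrib]
  have h4 : ∀ j : ↥P, (A ⟨i, hi⟩ j * x j.1 -
      if h : j.1 ∈ χ i then A ⟨i, hi⟩ j * x j.1 else 0)
      = if j = ⟨f i, hi⟩ then x (f i) else 0 := by
    intro j
    by_cases hj : j.1 ∈ χ i
    · rw [dif_pos hj, sub_self, if_neg]
      intro he
      rw [he] at hj
      exact hfχ i hj
    · rw [dif_neg hj, sub_zero]
      by_cases he : j = ⟨f i, hi⟩
      · rw [if_pos he, he, hA.1 ⟨i, hi⟩, one_mul]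
      · rw [if_neg he, hA.2 ⟨i, hi⟩ j he (by simpa using hj), zero_mul]
  rw [Finset.sum_congr rfl fun j _ => h4 j, Finset.sum_ite_eq' Finset.univ (⟨f i, hi⟩ : ↥P)]
  simp

lemma lower_bound {m n : ℕ} (I : TGICP m n)
    (h : ∀ i, I.f i ∈ I.M1 ∩ I.M2 → I.χ i ⊆ I.M1 ∩ I.M2)
    {l1 l2 : ℕ} (G1 : Matrix (Fin l1) ↥I.M1 K) (G2 : Matrix (Fin l2) ↥I.M2 K)
    (hc : I.IsCode K G1 G2) :
    I.mrk K (I.M1 \ I.M2) + I.mrk K (I.M2 \ I.M1) + I.mrk K (I.M1 ∩ I.M2) ≤ l1 + l2 := by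
  classical
  set G1e : Matrix (Fin l1) (Fin m) K :=
    fun k j => if hj : j ∈ I.M1 then G1 k ⟨j, hj⟩ else 0 with hG1e
  set G2e : Matrix (Fin l2) (Fin m) K :=
    fun k j => if hj : j ∈ I.M2 then G2 k ⟨j, hj⟩ else 0 with hG2e
  -- Step 1: extract linear decoding rows
  have key : ∀ i : Fin n, ∃ (u : Fin l1 → K) (v : Fin l2 → K),
      ∀ j, j ∉ I.χ i →
        (Matrix.vecMul u G1e + Matrix.vecMul v G2e) j = if j = I.f i then 1 else 0 := by
    intro i
    obtain ⟨D, hD⟩ := hc i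
    set T : (Fin m → K) →ₗ[K] (Fin l1 → K) × ((Fin l2 → K) × (↥(I.χ i) → K)) :=
      (G1.mulVecLin.comp (LinearMap.funLeft K K Subtype.val)).prod
      ((G2.mulVecLin.comp (LinearMap.funLeft K K Subtype.val)).prod
        (LinearMap.funLeft K K Subtype.val)) with hT
    obtain ⟨ψ, hψ⟩ := exists_linear_comp T (LinearMap.proj (I.f i))
      (fun w => D w.1 w.2.1 w.2.2)
      (fun x => hD x)
    set φ1 : (Fin l1 → K) →ₗ[K] K :=
      ψ.comp (LinearMap.inl K (Fin l1 → K) ((Fin l2 → K) × (↥(I.χ i) → K))) with hφ1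
    set φ2 : (Fin l2 → K) →ₗ[K] K :=
      ψ.comp ((LinearMap.inr K (Fin l1 → K) ((Fin l2 → K) × (↥(I.χ i) → K))).comp
        (LinearMap.inl K (Fin l2 → K) (↥(I.χ i) → K))) with hφ2
    refine ⟨fun k => φ1 (Pi.single k 1), fun k => φ2 (Pi.single k 1), fun j hj => ?_⟩
    set x : Fin m → K := Pi.single j 1 with hx
    have hval : ψ (T x) = if j = I.f i then 1 else 0 := by
      rw [hψ x]
      simp only [LinearMap.proj_apply, hx]
      rw [Pi.single_apply]
      congr 1
      exact propext (eq_comm)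
    have hthird : (fun t : ↥(I.χ i) => x t.1) = 0 := by
      funext t
      exact Pi.single_eq_of_ne (fun he => hj (by rw [← he]; exact t.2)) 1
    have hfirst : (G1.mulVec fun t : ↥I.M1 => x t.1) = fun k => G1e k j := by
      funext k
      show ∑ t : ↥I.M1, G1 k t * x t.1 = G1e k j
      rw [sum_subtype_dite (fun t : ↥I.M1 => G1 k t * x t.1)]
      rw [Finset.sum_eq_single j]
      · by_cases hm : j ∈ I.M1
        · rw [dif_pos hm, hx, Pi.single_eq_same, mul_one]
          simp only [hG1e]
          rw [dif_pos hm]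
        · rw [dif_neg hm]
          simp only [hG1e]
          rw [dif_neg hm]
      · intro t _ ht
        have hx0 : x t = 0 := Pi.single_eq_of_ne ht 1
        by_cases hm : t ∈ I.M1
        · rw [dif_pos hm, hx0, mul_zero]
        · rw [dif_neg hm]
      · intro hju; exact absurd (Finset.mem_univ j) hju
    have hsecond : (G2.mulVec fun t : ↥I.M2 => x t.1) = fun k => G2e k j := by
      funext k
      show ∑ t : ↥I.M2, G2 k t * x t.1 = G2e k j
      rw [sum_subtype_dite (fun t : ↥I.M2 => G2 k t * x t.1)]
      rw [Finset.sum_eq_single j]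
      · by_cases hm : j ∈ I.M2
        · rw [dif_pos hm, hx, Pi.single_eq_same, mul_one]
          simp only [hG2e]
          rw [dif_pos hm]
        · rw [dif_neg hm]
          simp only [hG2e]
          rw [dif_neg hm]
      · intro t _ ht
        have hx0 : x t = 0 := Pi.single_eq_of_ne ht 1
        by_cases hm : t ∈ I.M2
        · rw [dif_pos hm, hx0, mul_zero]
        · rw [dif_neg hm]
      · intro hju; exact absurd (Finset.mem_univ j) hju
    have hTx : T x = ((fun k => G1e k j), ((fun k => G2e k j), 0)) := by
      rw [hT]
      simp only [LinearMap.prod_apply, LinearMap.comp_apply, Function.prod,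
        Matrix.mulVecLin_apply]
      rw [show (LinearMap.funLeft K K (Subtype.val : ↥I.M1 → Fin m)) x
            = (fun t : ↥I.M1 => x t.1) from rfl,
          show (LinearMap.funLeft K K (Subtype.val : ↥I.M2 → Fin m)) x
            = (fun t : ↥I.M2 => x t.1) from rfl,
          show (LinearMap.funLeft K K (Subtype.val : ↥(I.χ i) → Fin m)) x
            = (fun t : ↥(I.χ i) => x t.1) from rfl,
        hfirst, hsecond, hthird]
    have hdec : ψ (T x) = φ1 (fun k => G1e k j) + φ2 (fun k => G2e k j) := by
      rw [hTx]
      have hsplit : (((fun k => G1e k j), ((fun k => G2e k j), (0 : ↥(I.χ i) → K))) :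
          (Fin l1 → K) × ((Fin l2 → K) × (↥(I.χ i) → K)))
          = ((fun k => G1e k j), (0, 0)) + (0, ((fun k => G2e k j), 0)) := by
        simp [Prod.ext_iff]
      rw [hsplit, map_add]
      rfl
    have hu : φ1 (fun k => G1e k j) = ∑ k, G1e k j * φ1 (Pi.single k 1) :=
      psi_eq_sum φ1 _
    have hv : φ2 (fun k => G2e k j) = ∑ k, G2e k j * φ2 (Pi.single k 1) :=
      psi_eq_sum φ2 _
    have hvm : (Matrix.vecMul (fun k => φ1 (Pi.single k 1)) G1e
        + Matrix.vecMul (fun k => φ2 (Pi.single k 1)) G2e) j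
        = ∑ k, G1e k j * φ1 (Pi.single k 1) + ∑ k, G2e k j * φ2 (Pi.single k 1) := by
      simp [Matrix.vecMul, dotProduct, mul_comm]
    rw [hvm, ← hu, ← hv, ← hdec, hval]
  choose u v hkey using key
  set a : Fin n → (Fin m → K) :=
    fun i => Matrix.vecMul (u i) G1e + Matrix.vecMul (v i) G2e with ha
  -- submodules
  set V1 : Submodule K (Fin m → K) := LinearMap.range G1e.vecMulLinear with hV1
  set V2 : Submodule K (Fin m → K) := LinearMap.range G2e.vecMulLinear with hV2
  set V : Submodule K (Fin m → K) := V1 ⊔ V2 with hV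
  have haV : ∀ i, a i ∈ V := fun i =>
    Submodule.mem_sup.2 ⟨_, ⟨u i, rfl⟩, _, ⟨v i, rfl⟩, rfl⟩
  have hV1z : ∀ w ∈ V1, ∀ j, j ∉ I.M1 → w j = 0 := by
    rintro w ⟨u0, rfl⟩ j hj
    show (Matrix.vecMul u0 G1e) j = 0
    simp only [Matrix.vecMul, dotProduct]
    refine Finset.sum_eq_zero fun k _ => ?_
    rw [hG1e]
    show u0 k * (if hj' : j ∈ I.M1 then G1 k ⟨j, hj'⟩ else 0) = 0
    rw [dif_neg hj, mul_zero]
  have hV2z : ∀ w ∈ V2, ∀ j, j ∉ I.M2 → w j = 0 := by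
    rintro w ⟨v0, rfl⟩ j hj
    show (Matrix.vecMul v0 G2e) j = 0
    simp only [Matrix.vecMul, dotProduct]
    refine Finset.sum_eq_zero fun k _ => ?_
    rw [hG2e]
    show v0 k * (if hj' : j ∈ I.M2 then G2 k ⟨j, hj'⟩ else 0) = 0
    rw [dif_neg hj, mul_zero]
  -- projections
  set π1 : (Fin m → K) →ₗ[K] (↥(I.M1 \ I.M2) → K) :=
    LinearMap.funLeft K K Subtype.val with hπ1
  set π2 : (Fin m → K) →ₗ[K] (↥(I.M2 \ I.M1) → K) :=
    LinearMap.funLeft K K Subtype.val with hπ2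
  set π12 : (Fin m → K) →ₗ[K] (↥(I.M1 ∩ I.M2) → K) :=
    LinearMap.funLeft K K Subtype.val with hπ12
  -- dimension bound on V
  have hdimV : Module.finrank K V ≤ l1 + l2 := by
    have h12 := Submodule.finrank_sup_add_finrank_inf_eq V1 V2
    have hd1 : Module.finrank K V1 ≤ l1 := by
      rw [hV1, range_vecMulLinear, ← Matrix.rank_eq_finrank_span_row]
      exact le_trans (Matrix.rank_le_card_height G1e) (by simp)
    have hd2 : Module.finrank K V2 ≤ l2 := by
      rw [hV2, range_vecMulLinear, ← Matrix.rank_eq_finrank_span_row]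
      exact le_trans (Matrix.rank_le_card_height G2e) (by simp)
    rw [hV]
    omega
  -- generic minrank bound
  have mrk_le : ∀ (P : Set (Fin m)) (U : Submodule K (↥P → K)),
      (∀ i : {i : Fin n // I.f i ∈ P}, (fun j : ↥P => a i.1 j.1) ∈ U) →
      I.mrk K P ≤ Module.finrank K U := by
    intro P U hmem
    set B : Matrix {i : Fin n // I.f i ∈ P} ↥P K := fun i j => a i.1 j.1 with hB
    have hBc : Completes (fun i : {i : Fin n // I.f i ∈ P} => (⟨I.f i.1, i.2⟩ : ↥P))
        (fun i => {j : ↥P | j.1 ∈ I.χ i.1}) B := by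
      constructor
      · intro i
        have := hkey i.1 (I.f i.1) (I.not_mem i.1)
        show a i.1 (I.f i.1) = 1
        simp only [ha]
        rw [this, if_pos rfl]
      · intro i j hne hns
        have hnχ : j.1 ∉ I.χ i.1 := by simpa using hns
        have := hkey i.1 j.1 hnχ
        show a i.1 j.1 = 0
        simp only [ha]
        rw [this, if_neg]
        intro he
        exact hne (Subtype.ext he)
    have hle : I.mrk K P ≤ B.rank := by
      unfold TGICP.mrk minrk
      exact Nat.sInf_le ⟨B, hBc, rfl⟩
    refine hle.trans ?_
    rw [matrix_rank_eq_finrank_span_rows]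
    refine Submodule.finrank_mono ?_
    refine Submodule.span_le.2 (Set.range_subset_iff.2 fun i => ?_)
    exact hmem i
  -- bound for P1
  have hb1 : I.mrk K (I.M1 \ I.M2) ≤ Module.finrank K (V.map π1) :=
    mrk_le _ _ (fun i => ⟨a i.1, haV i.1, rfl⟩)
  -- bound for P2, via V2
  have hb2 : I.mrk K (I.M2 \ I.M1) ≤
      Module.finrank K ((V ⊓ LinearMap.ker π1).map π2) := by
    refine le_trans (mrk_le _ (V.map π2) (fun i => ⟨a i.1, haV i.1, rfl⟩)) ?_
    refine Submodule.finrank_mono ?_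
    have hmap : V.map π2 = V2.map π2 := by
      rw [hV, Submodule.map_sup]
      have : V1.map π2 = ⊥ := by
        rw [eq_bot_iff]
        rintro w ⟨w0, hw0, rfl⟩
        simp only [Submodule.mem_bot]
        funext j
        exact hV1z w0 hw0 j.1 (fun hm => j.2.2 hm)
      rw [this, bot_sup_eq]
    rw [hmap]
    refine Submodule.map_mono (le_inf le_sup_right ?_)
    intro w hw
    rw [LinearMap.mem_ker]
    funext j
    exact hV2z w hw j.1 (fun hm => j.2.2 hm)
  -- bound for P12
  have hb12 : I.mrk K (I.M1 ∩ I.M2) ≤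
      Module.finrank K ↥(V ⊓ LinearMap.ker π1 ⊓ LinearMap.ker π2) := by
    refine le_trans (mrk_le _ ((V ⊓ LinearMap.ker π1 ⊓ LinearMap.ker π2).map π12)
      (fun i => ?_)) (Submodule.finrank_map_le _ _)
    refine ⟨a i.1, ?_, rfl⟩
    have hzero : ∀ j : Fin m, j ∉ I.M1 ∩ I.M2 → a i.1 j = 0 := by
      intro j hj
      have hnχ : j ∉ I.χ i.1 := fun hc' => hj (h i.1 i.2 hc')
      have := hkey i.1 j hnχ
      simp only [ha]
      rw [this, if_neg]
      intro he
      exact hj (he ▸ i.2)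
    refine Submodule.mem_inf.2 ⟨Submodule.mem_inf.2 ⟨haV i.1, ?_⟩, ?_⟩
    · show π1 (a i.1) = 0
      funext j
      exact hzero j.1 (fun hm => j.2.2 hm.2)
    · show π2 (a i.1) = 0
      funext j
      exact hzero j.1 (fun hm => j.2.2 hm.1)
  -- rank–nullity chain
  have eq1 := finrank_split V π1
  have eq2 := finrank_split (V ⊓ LinearMap.ker π1) π2
  omega

end Helpers

/-- Case II-A.  If every receiver of the TGICP `I` whose demand lies in
`P_{12} = M1 ∩ M2` has all of its side information inside `P_{12}` (equivalently, neither
`I_{12} → I_1` nor `I_{12} → I_2` exists), then `l*_q(I) = mrk_1 + mrk_2 + mrk_{12}`,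
regardless of the other interactions and whether they are fully- or partially-participated. -/
theorem stmt2 (K : Type*) [Field K] [Fintype K] {m n : ℕ} (I : TGICP m n)
    (h : ∀ i, I.f i ∈ I.M1 ∩ I.M2 → I.χ i ⊆ I.M1 ∩ I.M2) :
    I.optLen K =
      I.mrk K (I.M1 \ I.M2) + I.mrk K (I.M2 \ I.M1) + I.mrk K (I.M1 ∩ I.M2) := by
  classical
  set P1 : Set (Fin m) := I.M1 \ I.M2 with hP1
  set P2 : Set (Fin m) := I.M2 \ I.M1 with hP2
  set P12 : Set (Fin m) := I.M1 ∩ I.M2 with hP12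
  clear_value P1 P2 P12
  -- optimal completions for the three sub-problems
  have hopt : ∀ P : Set (Fin m), ∃ A : Matrix {i : Fin n // I.f i ∈ P} ↥P K,
      Completes (fun i : {i : Fin n // I.f i ∈ P} => (⟨I.f i.1, i.2⟩ : ↥P))
        (fun i => {j : ↥P | j.1 ∈ I.χ i.1}) A ∧
        Module.finrank K ↥(Submodule.span K (Set.range A)) = I.mrk K P := by
    intro P
    have hne : {r | ∃ A : Matrix {i : Fin n // I.f i ∈ P} ↥P K,
        Completes (fun i : {i : Fin n // I.f i ∈ P} => (⟨I.f i.1, i.2⟩ : ↥P))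
          (fun i => {j : ↥P | j.1 ∈ I.χ i.1}) A ∧ A.rank = r}.Nonempty := by
      refine ⟨_, (fun i j => if j = (⟨I.f i.1, i.2⟩ : ↥P) then (1 : K) else 0), ?_, rfl⟩
      exact ⟨fun i => if_pos rfl, fun i j hne _ => if_neg hne⟩
    obtain ⟨A, hAc, hAr⟩ := Nat.sInf_mem hne
    refine ⟨A, hAc, ?_⟩
    rw [← matrix_rank_eq_finrank_span_rows]
    exact hAr
  obtain ⟨A1, hA1c, hA1r⟩ := hopt (P1)
  obtain ⟨A2, hA2c, hA2r⟩ := hopt (P2)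
  obtain ⟨A12, hA12c, hA12r⟩ := hopt (P12)
  obtain ⟨E1, hE1⟩ := decode_lemma I.f I.χ I.not_mem _ A1 hA1c _ hA1r
  obtain ⟨E2, hE2⟩ := decode_lemma I.f I.χ I.not_mem _ A2 hA2c _ hA2r
  obtain ⟨E12, hE12⟩ := decode_lemma I.f I.χ I.not_mem _ A12 hA12c _ hA12r
  -- the code
  set G1 : Matrix (Fin (I.mrk K (P1) + I.mrk K (P12))) ↥I.M1 K :=
    fun k j => Fin.addCases
      (fun k1 => if hp : j.1 ∈ P1 then E1 k1 ⟨j.1, hp⟩ else 0)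
      (fun k2 => if hp : j.1 ∈ P12 then E12 k2 ⟨j.1, hp⟩ else 0) k with hG1
  set G2 : Matrix (Fin (I.mrk K (P2))) ↥I.M2 K :=
    fun k j => if hp : j.1 ∈ P2 then E2 k ⟨j.1, hp⟩ else 0 with hG2
  have hcode : I.IsCode K G1 G2 := by
    intro i
    by_cases h2 : I.f i ∈ I.M2
    · by_cases h1 : I.f i ∈ I.M1
      · -- demand in P12, use second block of sender 1
        obtain ⟨D, hD⟩ := hE12 i (by rw [hP12]; exact ⟨h1, h2⟩)
        refine ⟨fun y1 _ s => D (fun k => y1 (Fin.natAdd _ k)) s, fun x => ?_⟩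
        refine hD x _ fun k => ?_
        show (∑ j : ↥I.M1, G1 (Fin.natAdd (I.mrk K P1) k) j * x j.1) = _
        have hcol : ∀ j : ↥I.M1, G1 (Fin.natAdd (I.mrk K P1) k) j
            = if hp : j.1 ∈ P12 then E12 k ⟨j.1, hp⟩ else 0 := by
          intro j
          simp only [hG1]
          rw [Fin.addCases_right]
        rw [Finset.sum_congr rfl fun j _ => by rw [hcol j]]
        exact sum_restrict (by rw [hP12]; exact fun t ht => ht.1) _ x
      · -- demand in P2
        obtain ⟨D, hD⟩ := hE2 i (by rw [hP2]; exact ⟨h2, h1⟩)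
        refine ⟨fun _ y2 s => D y2 s, fun x => ?_⟩
        refine hD x _ fun k => ?_
        show (∑ j : ↥I.M2, G2 k j * x j.1) = _
        exact sum_restrict (by rw [hP2]; exact fun t ht => ht.1) _ x
    · -- demand in P1
      have h1 : I.f i ∈ I.M1 := by
        have := I.cover
        have hu : I.f i ∈ I.M1 ∪ I.M2 := by rw [this]; trivial
        rcases hu with h' | h'
        · exact h'
        · exact absurd h' h2
      obtain ⟨D, hD⟩ := hE1 i (by rw [hP1]; exact ⟨h1, h2⟩)
      refine ⟨fun y1 _ s => D (fun k => y1 (Fin.castAdd _ k)) s, fun x => ?_⟩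
      refine hD x _ fun k => ?_
      show (∑ j : ↥I.M1, G1 (Fin.castAdd (I.mrk K P12) k) j * x j.1) = _
      have hcol : ∀ j : ↥I.M1, G1 (Fin.castAdd (I.mrk K P12) k) j
          = if hp : j.1 ∈ P1 then E1 k ⟨j.1, hp⟩ else 0 := by
        intro j
        simp only [hG1]
        rw [Fin.addCases_left]
      rw [Finset.sum_congr rfl fun j _ => by rw [hcol j]]
      exact sum_restrict (by rw [hP1]; exact fun t ht => ht.1) _ x
  have hmem : I.mrk K (P1) + I.mrk K (P2) + I.mrk K (P12)
      ∈ {L | ∃ (l1 l2 : ℕ) (G1 : Matrix (Fin l1) ↥I.M1 K) (G2 : Matrix (Fin l2) ↥I.M2 K),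
        I.IsCode K G1 G2 ∧ L = l1 + l2} := by
    exact ⟨_, _, G1, G2, hcode, by omega⟩
  unfold TGICP.optLen
  apply le_antisymm
  · exact Nat.sInf_le hmem
  · refine le_csInf ⟨_, hmem⟩ ?_
    rintro L ⟨l1, l2, G1', G2', hc', rfl⟩
    have hh : ∀ i, I.f i ∈ I.M1 ∩ I.M2 → I.χ i ⊆ I.M1 ∩ I.M2 := by
      rw [← hP12]; exact h
    have hlb := lower_bound I hh G1' G2' hc'
    rw [hP1, hP2, hP12]
    exact hlb
end

section
/- Let F_x^{(1)}, …, F_x^{(u)} be SGICP fitting matrices (F_x^{(i)} of size n_i × m_i), and for each i let F^{(i)} ≈ F_x^{(i)} be a completion with r_i := rank(F^{(i)}) whose first r_i rows span the row space of F^{(i)}, such that r_1 ≥ r_2 ≥ … ≥ r_u (the r_i need not equal the minranks); let P^{(i)} be the (n_i − r_i) × r_i matrix such that the last n_i − r_i rows of F^{(i)} equal P^{(i)} F^{(i)}_{[r_i]}. For i ≠ j set F̂^{(i,j)} := F^{(j)}_{[r_i]} if r_j ≥ r_i, and F̂^{(i,j)} := F^{(j)}_{[r_j]} with r_i − r_j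 zero rows appended otherwise; also set F̂^{(1,1)} := F^{(1)}_{[r_1]}. Let F_x^E be a jointly extended fitting matrix whose i-th diagonal block is F_x^{(i)} and whose (i,j) off-diagonal block B_{x0}^{(i,j)} (a pattern of unknowns and zeros) is completed by B^{(i,j)} := the stacked matrix [F̂^{(i,j)}; P^{(i)} F̂^{(i,j)}] (i.e., B^{(i,j)} vanishes at every known-zero position of B_{x0}^{(i,j)}). Then the r_1 × (Σ_j m_j) matrix G_E = (F̂^{(1,1)} | F̂^{(1,2)} | … | F̂^{(1,u)}) is an encoding matrix for the SGICP F_x^E: there exists a matrix D_E over F_q with D_E G_E ≈ F_x^E. In particular mrk_q(F_x^E) ≤ r_1. -/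
open scoped Classical

/-- `F̂`: the matrix formed by the first `min r r'` rows of `F` (an `n' × m'` matrix of
rank `r' ≤ n'`), padded with zero rows at the bottom so as to have exactly `r` rows.
When `r' ≥ r` this is `F_{[r]}`; otherwise it is `F_{[r']}` with `r - r'` zero rows appended. -/
def padFirst {K : Type*} [Zero K] {n' m' : ℕ} (r r' : ℕ) (h : r' ≤ n')
    (F : Matrix (Fin n') (Fin m') K) : Matrix (Fin r) (Fin m') K :=
  Matrix.of fun a c => if hh : (a : ℕ) < r' then F ⟨a, lt_of_lt_of_le hh h⟩ c else 0

/-- The stacked matrix `[F̂ ; P·F̂]`: its first `r` rows are those of `F̂` and its remaining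
rows are the corresponding rows of `P · F̂`. -/
noncomputable def stacked {K : Type*} [Field K] {n r m' : ℕ}
    (Pm : Matrix (Fin n) (Fin r) K) (Fh : Matrix (Fin r) (Fin m') K) :
    Matrix (Fin n) (Fin m') K :=
  Matrix.of fun k c => if h : (k : ℕ) < r then Fh ⟨k, h⟩ c else ∑ t, Pm k t * Fh t c

/-- joint-extension code construction, Theorem 2.
Let `F_x^(i)` (`i : Fin (u+1)`) be SGICP fitting matrices with completions `F i ≈ F_x^(i)`
of rank `r i`, with `r 0 ≥ r 1 ≥ … ≥ r u`, whose first `r i` rows span their row spaces: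
`P i` expresses every row of index `≥ r i` of `F i` in terms of `(F i)_{[r i]}` (hyp `hP`).
Let `F_x^E` (demands `⟨i,k⟩ ↦ ⟨i, f i k⟩`, side information `X`) be a jointly extended
fitting matrix whose `i`-th diagonal block is `F_x^(i)` (hyp `hXdiag`) and whose `(i,i')`
off-diagonal block is completed by `B^(i,i') = [F̂^(i,i') ; P^(i) F̂^(i,i')]`, i.e. `B^(i,i')`
vanishes at every known-zero position (hyp `hXoff`), where `F̂^(i,i') = padFirst (r i) (r i')`.
Then `G_E = (F̂^(1,1) | … | F̂^(1,u))` is an encoding matrix for `F_x^E`: there is a matrix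
`D` with `D * G_E ≈ F_x^E`.  In particular `mrk_q(F_x^E) ≤ r 0`. -/
theorem stmt3 (K : Type*) [Field K] [Fintype K]
    (u : ℕ) (nn mm : Fin (u + 1) → ℕ)
    (f : ∀ s, Fin (nn s) → Fin (mm s))
    (χ : ∀ s, Fin (nn s) → Set (Fin (mm s)))
    (hχ : ∀ s k, f s k ∉ χ s k)
    (F : ∀ s, Matrix (Fin (nn s)) (Fin (mm s)) K)
    (hF : ∀ s, Completes (f s) (χ s) (F s))
    (r : Fin (u + 1) → ℕ)
    (hrank : ∀ s, (F s).rank = r s)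
    (hrn : ∀ s, r s ≤ nn s)
    (hmono : ∀ s t : Fin (u + 1), s ≤ t → r t ≤ r s)
    (P : ∀ s, Matrix (Fin (nn s)) (Fin (r s)) K)
    (hP : ∀ s (k : Fin (nn s)), r s ≤ (k : ℕ) →
      ∀ c, F s k c = ∑ t, P s k t * F s (Fin.castLE (hrn s) t) c)
    (X : (Σ s, Fin (nn s)) → Set (Σ s, Fin (mm s)))
    (hXdiag : ∀ s (k : Fin (nn s)) (j : Fin (mm s)),
      (⟨s, j⟩ : Σ s, Fin (mm s)) ∈ X ⟨s, k⟩ ↔ j ∈ χ s k)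
    (hXoff : ∀ s t, s ≠ t → ∀ (k : Fin (nn s)) (c : Fin (mm t)),
      (⟨t, c⟩ : Σ s, Fin (mm s)) ∉ X ⟨s, k⟩ →
        stacked (P s) (padFirst (r s) (r t) (hrn t) (F t)) k c = 0) :
    (∃ D : Matrix (Σ s, Fin (nn s)) (Fin (r 0)) K,
      Completes (fun p : Σ s, Fin (nn s) => (⟨p.1, f p.1 p.2⟩ : Σ s, Fin (mm s))) X
        (D * Matrix.of fun (a : Fin (r 0)) (q : Σ s, Fin (mm s)) =>
          padFirst (r 0) (r q.1) (hrn q.1) (F q.1) a q.2)) ∧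
    minrk K (fun p : Σ s, Fin (nn s) => (⟨p.1, f p.1 p.2⟩ : Σ s, Fin (mm s))) X ≤ r 0 := by
  classical
  set G : Matrix (Fin (r 0)) (Σ s, Fin (mm s)) K :=
    Matrix.of (fun (a : Fin (r 0)) (q : Σ s, Fin (mm s)) =>
      padFirst (r 0) (r q.1) (hrn q.1) (F q.1) a q.2) with hG
  set D : Matrix (Σ s, Fin (nn s)) (Fin (r 0)) K :=
    Matrix.of (fun p a =>
      if _ : (p.2 : ℕ) < r p.1 then (if (a : ℕ) = (p.2 : ℕ) then 1 else 0)
      else if ha : (a : ℕ) < r p.1 then P p.1 p.2 ⟨a, ha⟩ else 0) with hD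
  have hr0 : ∀ s, r s ≤ r 0 := fun s => hmono 0 s (Fin.zero_le s)
  have key : ∀ (p : Σ s, Fin (nn s)) (q : Σ s, Fin (mm s)),
      (D * G) p q = stacked (P p.1) (padFirst (r p.1) (r q.1) (hrn q.1) (F q.1)) p.2 q.2 := by
    rintro ⟨s, k⟩ ⟨t, c⟩
    rw [Matrix.mul_apply]
    by_cases hk : (k : ℕ) < r s
    · have hk0 : (k : ℕ) < r 0 := lt_of_lt_of_le hk (hr0 s)
      rw [Finset.sum_eq_single (⟨(k : ℕ), hk0⟩ : Fin (r 0))]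
      · simp [hD, hG, stacked, padFirst, hk]
      · intro a _ hne
        have hane : ¬ ((a : ℕ) = (k : ℕ)) := fun h => hne (Fin.ext h)
        simp [hD, hk, hane]
      · simp
    · have step : ∀ a : Fin (r 0), D ⟨s, k⟩ a * G a ⟨t, c⟩ =
          if ha : (a : ℕ) < r s then
            P s k ⟨a, ha⟩ * padFirst (r s) (r t) (hrn t) (F t) ⟨a, ha⟩ c else 0 := by
        intro a
        by_cases ha : (a : ℕ) < r s
        · simp [hD, hG, hk, ha, padFirst]
        · simp [hD, hk, ha]
      rw [Finset.sum_congr rfl (fun a _ => step a)]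
      rw [stacked]
      simp only [Matrix.of_apply]
      rw [dif_neg hk]
      have h1 := Fin.sum_univ_eq_sum_range (fun i =>
        if ha : i < r s then
          P s k ⟨i, ha⟩ * padFirst (r s) (r t) (hrn t) (F t) ⟨i, ha⟩ c else 0) (r 0)
      have h2 := Fin.sum_univ_eq_sum_range (fun i =>
        if ha : i < r s then
          P s k ⟨i, ha⟩ * padFirst (r s) (r t) (hrn t) (F t) ⟨i, ha⟩ c else 0) (r s)
      have h3 : (∑ i ∈ Finset.range (r s), (fun i =>
          if ha : i < r s then
            P s k ⟨i, ha⟩ * padFirst (r s) (r t) (hrn t) (F t) ⟨i, ha⟩ c else 0) i)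
          = ∑ i ∈ Finset.range (r 0), (fun i =>
          if ha : i < r s then
            P s k ⟨i, ha⟩ * padFirst (r s) (r t) (hrn t) (F t) ⟨i, ha⟩ c else 0) i := by
        refine Finset.sum_subset (Finset.range_subset_range.mpr (hr0 s)) ?_
        intro i _ hi
        rw [Finset.mem_range, not_lt] at hi
        simp [not_lt.mpr hi]
      have h4 : (∑ τ : Fin (r s), P s k τ * padFirst (r s) (r t) (hrn t) (F t) τ c)
          = ∑ τ : Fin (r s), (fun i =>
          if ha : i < r s then
            P s k ⟨i, ha⟩ * padFirst (r s) (r t) (hrn t) (F t) ⟨i, ha⟩ c else 0) (τ : ℕ) := by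
        refine Finset.sum_congr rfl fun τ _ => ?_
        simp [τ.isLt]
      rw [h4, h2, h3, ← h1]
  have diag : ∀ (s : Fin (u + 1)) (k : Fin (nn s)) (c : Fin (mm s)),
      stacked (P s) (padFirst (r s) (r s) (hrn s) (F s)) k c = F s k c := by
    intro s k c
    rw [stacked]
    simp only [Matrix.of_apply]
    by_cases hk : (k : ℕ) < r s
    · rw [dif_pos hk]
      simp [padFirst, hk]
    · rw [dif_neg hk]
      rw [hP s k (le_of_not_gt hk) c]
      refine Finset.sum_congr rfl fun τ _ => ?_
      simp only [padFirst, Matrix.of_apply, τ.isLt, dif_pos]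
      rfl
  have hcomp : Completes
      (fun p : Σ s, Fin (nn s) => (⟨p.1, f p.1 p.2⟩ : Σ s, Fin (mm s))) X (D * G) := by
    constructor
    · rintro ⟨s, k⟩
      show (D * G) ⟨s, k⟩ ⟨s, f s k⟩ = 1
      rw [key, diag]
      exact (hF s).1 k
    · rintro ⟨s, k⟩ ⟨t, c⟩ hne hnot
      show (D * G) ⟨s, k⟩ ⟨t, c⟩ = 0
      by_cases hst : t = s
      · subst hst
        rw [key, diag]
        refine (hF t).2 k c (fun h => hne ?_) (fun hc => hnot ((hXdiag t k c).mpr hc))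
        simp [h]
      · rw [key]
        exact hXoff s t (fun h => hst h.symm) k c hnot
  refine ⟨⟨D, hcomp⟩, ?_⟩
  have hrk : (D * G).rank ≤ r 0 := by
    calc (D * G).rank ≤ G.rank := Matrix.rank_mul_le_right D G
      _ ≤ Fintype.card (Fin (r 0)) := G.rank_le_card_height
      _ = r 0 := Fintype.card_fin _
  exact le_trans (Nat.sInf_le ⟨D * G, hcomp, rfl⟩) hrk
end

section
/- Under the hypotheses of the joint-extension construction — F_x^{(1)}, …, F_x^{(u)} are SGICP fitting matrices with completions F^{(i)} ≈ F_x^{(i)} of ranks r_1 ≥ … ≥ r_u whose first r_i rows span their row spaces, P^{(i)} expresses the last n_i − r_i rows of F^{(i)} in terms of F^{(i)}_{[r_i]}, F̂^{(i,j)} := F^{(j)}_{[r_i]} if r_j ≥ r_i and F̂^{(i,j)} := F^{(j)}_{[r_j]} padded below with r_i − r_j zero rows otherwise, and F_x^E is a jointly extended fitting matrix with diagonal blocks F_x^{(i)} whose (i,j) off-diagonal block is completed by [F̂^{(i,j)}; P^{(i)} F̂^{(i,j)}] — if in addition r_1 = max_{i∈[u]} mrk_q(F_x^{(i)}), then mrk_q(F_x^E)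 = r_1 = max_{i∈[u]} mrk_q(F_x^{(i)}); i.e., the scalar linear code given by G_E = (F̂^{(1,1)} | … | F̂^{(1,u)}) is optimal for F_x^E. -/
open scoped Classical

/-- Taking a submatrix along arbitrary index maps does not increase the rank. -/
lemma rank_submatrix_le' {K : Type*} [Field K] {R M R' M' : Type*}
    [Fintype R] [Fintype M] [Fintype R'] [Fintype M']
    (A : Matrix R M K) (g : R' → R) (h : M' → M) :
    (A.submatrix g h).rank ≤ A.rank := by
  classical
  have hfac : A.submatrix g h =
      (Matrix.of fun i j => if j = g i then (1 : K) else 0) * A *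
      (Matrix.of fun i j => if i = h j then (1 : K) else 0) := by
    ext i j
    simp only [Matrix.mul_apply, Matrix.of_apply, Matrix.submatrix_apply]
    rw [Finset.sum_eq_single (h j)]
    · rw [if_pos rfl, mul_one, Finset.sum_eq_single (g i)]
      · simp
      · intro b _ hb; simp [hb]
      · simp
    · intro b _ hb; simp [hb]
    · simp
  rw [hfac]
  exact (Matrix.rank_mul_le_left _ _).trans (Matrix.rank_mul_le_right _ _)

/-- optimality of the joint-extension construction.
Under the hypotheses of the joint-extension construction (see Statement 3), if in addition
`r 0 = max_{i} mrk_q(F_x^(i))`, then `mrk_q(F_x^E) = r 0 = max_{i} mrk_q(F_x^(i))`, i.e. the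
scalar linear code given by `G_E = (F̂^(1,1) | … | F̂^(1,u))` is optimal for `F_x^E`. -/
theorem stmt4 (K : Type*) [Field K] [Fintype K]
    (u : ℕ) (nn mm : Fin (u + 1) → ℕ)
    (f : ∀ s, Fin (nn s) → Fin (mm s))
    (χ : ∀ s, Fin (nn s) → Set (Fin (mm s)))
    (hχ : ∀ s k, f s k ∉ χ s k)
    (F : ∀ s, Matrix (Fin (nn s)) (Fin (mm s)) K)
    (hF : ∀ s, Completes (f s) (χ s) (F s))
    (r : Fin (u + 1) → ℕ)
    (hrank : ∀ s, (F s).rank = r s)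
    (hrn : ∀ s, r s ≤ nn s)
    (hmono : ∀ s t : Fin (u + 1), s ≤ t → r t ≤ r s)
    (P : ∀ s, Matrix (Fin (nn s)) (Fin (r s)) K)
    (hP : ∀ s (k : Fin (nn s)), r s ≤ (k : ℕ) →
      ∀ c, F s k c = ∑ t, P s k t * F s (Fin.castLE (hrn s) t) c)
    (X : (Σ s, Fin (nn s)) → Set (Σ s, Fin (mm s)))
    (hXdiag : ∀ s (k : Fin (nn s)) (j : Fin (mm s)),
      (⟨s, j⟩ : Σ s, Fin (mm s)) ∈ X ⟨s, k⟩ ↔ j ∈ χ s k)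
    (hXoff : ∀ s t, s ≠ t → ∀ (k : Fin (nn s)) (c : Fin (mm t)),
      (⟨t, c⟩ : Σ s, Fin (mm s)) ∉ X ⟨s, k⟩ →
        stacked (P s) (padFirst (r s) (r t) (hrn t) (F t)) k c = 0)
    (hopt : r 0 = Finset.univ.sup fun s => minrk K (f s) (χ s)) :
    minrk K (fun p : Σ s, Fin (nn s) => (⟨p.1, f p.1 p.2⟩ : Σ s, Fin (mm s))) X = r 0 := by
  classical
  -- the diagonal blocks of the explicit completion are the `F s`
  have hdiag : ∀ s (k : Fin (nn s)) (c : Fin (mm s)),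
      stacked (P s) (padFirst (r s) (r s) (hrn s) (F s)) k c = F s k c := by
    intro s k c
    unfold stacked padFirst
    by_cases h : (k : ℕ) < r s
    · simp [h]
    · simp only [Matrix.of_apply, dif_neg h]
      rw [hP s k (le_of_not_gt h) c]
      refine Finset.sum_congr rfl fun t _ => ?_
      simp [Fin.castLE, t.2]
  -- the explicit completion
  set E : Matrix (Σ s, Fin (nn s)) (Σ t, Fin (mm t)) K :=
    fun p q => stacked (P p.1) (padFirst (r p.1) (r q.1) (hrn q.1) (F q.1)) p.2 q.2 with hE
  have hEcomp : Completes (fun p : Σ s, Fin (nn s) => (⟨p.1, f p.1 p.2⟩ : Σ s, Fin (mm s))) X E := by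
    constructor
    · rintro ⟨s, k⟩
      show stacked (P s) (padFirst (r s) (r s) (hrn s) (F s)) k (f s k) = 1
      rw [hdiag]; exact (hF s).1 k
    · rintro ⟨s, k⟩ ⟨t, c⟩ hne hnX
      by_cases hst : s = t
      · subst hst
        show stacked (P s) (padFirst (r s) (r s) (hrn s) (F s)) k c = 0
        rw [hdiag]
        refine (hF s).2 k c (fun hc => hne (by simp [hc])) (fun hc => hnX ((hXdiag s k c).2 hc))
      · exact hXoff s t hst k c hnX
  have hr0 : ∀ s, r s ≤ r 0 := fun s => hmono 0 s (Fin.zero_le s)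
  -- factorization E = C * G with G having r 0 rows
  set C : Matrix (Σ s, Fin (nn s)) (Fin (r 0)) K :=
    fun p a => if h : (p.2 : ℕ) < r p.1 then (if (a : ℕ) = (p.2 : ℕ) then 1 else 0)
      else (if h2 : (a : ℕ) < r p.1 then P p.1 p.2 ⟨a, h2⟩ else 0) with hC
  set G : Matrix (Fin (r 0)) (Σ t, Fin (mm t)) K :=
    fun a q => padFirst (r 0) (r q.1) (hrn q.1) (F q.1) a q.2 with hG
  have hfac : E = C * G := by
    ext ⟨s, k⟩ ⟨t, c⟩
    rw [Matrix.mul_apply]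
    simp only [hE, Matrix.mul_apply, hC, hG]
    show stacked (P s) (padFirst (r s) (r t) (hrn t) (F t)) k c = _
    unfold stacked padFirst
    by_cases h : (k : ℕ) < r s
    · simp only [Matrix.of_apply, dif_pos h]
      rw [Finset.sum_eq_single (⟨(k : ℕ), lt_of_lt_of_le h (hr0 s)⟩ : Fin (r 0))]
      · simp [h]
      · intro b _ hb
        have hbk : (b : ℕ) ≠ (k : ℕ) := fun hbk => hb (by ext; exact hbk)
        simp [h, hbk]
      · simp
    · simp only [Matrix.of_apply, dif_neg h]
      set g : ℕ → K := fun i =>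
        (if h2 : i < r s then P s k ⟨i, h2⟩ else 0) *
        (if hh : i < r t then F t ⟨i, lt_of_lt_of_le hh (hrn t)⟩ c else 0) with hg
      have hL : (∑ t' : Fin (r s), P s k t' *
          (if hh : (t' : ℕ) < r t then F t ⟨t', lt_of_lt_of_le hh (hrn t)⟩ c else 0))
          = ∑ i ∈ Finset.range (r s), g i := by
        rw [← Fin.sum_univ_eq_sum_range g (r s)]
        refine Finset.sum_congr rfl fun t' _ => ?_
        simp [hg, t'.2]
      have hR : (∑ a : Fin (r 0), (if h2 : (a : ℕ) < r s then P s k ⟨a, h2⟩ else 0) *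
          (if hh : (a : ℕ) < r t then F t ⟨a, lt_of_lt_of_le hh (hrn t)⟩ c else 0))
          = ∑ i ∈ Finset.range (r 0), g i :=
        Fin.sum_univ_eq_sum_range g (r 0)
      calc (∑ t' : Fin (r s), P s k t' *
          (if hh : (t' : ℕ) < r t then F t ⟨t', lt_of_lt_of_le hh (hrn t)⟩ c else 0))
          = ∑ i ∈ Finset.range (r s), g i := hL
        _ = ∑ i ∈ Finset.range (r 0), g i := by
            refine Finset.sum_subset (Finset.range_subset_range.2 (hr0 s)) fun i _ hi => ?_
            have : ¬ i < r s := by simpa using hi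
            simp [hg, this]
        _ = _ := hR.symm
  -- upper bound
  have hub : minrk K (fun p : Σ s, Fin (nn s) => (⟨p.1, f p.1 p.2⟩ : Σ s, Fin (mm s))) X ≤ r 0 := by
    refine le_trans (Nat.sInf_le ⟨E, hEcomp, rfl⟩) ?_
    rw [hfac]
    exact (Matrix.rank_mul_le_right C G).trans
      ((Matrix.rank_le_card_height G).trans (Fintype.card_fin (r 0)).le)
  -- lower bound
  have hlb : r 0 ≤ minrk K (fun p : Σ s, Fin (nn s) => (⟨p.1, f p.1 p.2⟩ : Σ s, Fin (mm s))) X := by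
    obtain ⟨A, hA, hAr⟩ := Nat.sInf_mem (⟨E.rank, E, hEcomp, rfl⟩ :
      {r | ∃ A : Matrix (Σ s, Fin (nn s)) (Σ t, Fin (mm t)) K,
        Completes (fun p : Σ s, Fin (nn s) => (⟨p.1, f p.1 p.2⟩ : Σ s, Fin (mm s))) X A ∧
        A.rank = r}.Nonempty)
    rw [hopt]
    unfold minrk
    rw [← hAr]
    refine Finset.sup_le fun s _ => ?_
    have hsub : Completes (f s) (χ s) (A.submatrix (fun k : Fin (nn s) => (⟨s, k⟩ : Σ s, Fin (nn s))) (fun j : Fin (mm s) => (⟨s, j⟩ : Σ t, Fin (mm t)))) := by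
      constructor
      · intro k; exact hA.1 ⟨s, k⟩
      · intro k j hj hjχ
        refine hA.2 ⟨s, k⟩ ⟨s, j⟩ ?_ ?_
        · intro hc
          exact hj (by simpa using hc)
        · intro hc
          exact hjχ ((hXdiag s k j).1 hc)
    exact le_trans (Nat.sInf_le ⟨_, hsub, rfl⟩) (rank_submatrix_le' A _ _)
  exact le_antisymm hub hlb
end

section
/- Let F_x^{(1)}, …, F_x^{(u)} be SGICP fitting matrices and let F_x^E be the jointly extended fitting matrix whose i-th diagonal block is F_x^{(i)} and all of whose off-diagonal entries are unknowns. Suppose each sub-problem admits a (not necessarily optimal) scalar linear index code of length r_i, i.e., there exist matrices G^{(i)} ∈ F_q^{r_i × m_i} and D^{(i)} ∈ F_q^{n_i × r_i} with D^{(i)} G^{(i)} ≈ F_x^{(i)}. Let r_max = max_i r_i and G_E = (Ĝ^{(1)} | … | Ĝ^{(u)}), where Ĝ^{(i)} is G^{(i)} with r_max − r_i zero rows appended below. Then there exists a matrix D_E over F_q with D_E G_E ≈ F_x^E; that is, the zero-padded symbol-wise sum c^{(1)} + … + c^{(u)} of the individual codes is a scalar linear index code of length r_max for F_x^E. -/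
open scoped Classical

/-- Corollary 1: sum of codes for all-unknown joint extensions.
Let `F_x^(i)` (`i : Fin (u+1)`) be SGICP fitting matrices and let `F_x^E` be the jointly
extended fitting matrix whose `i`-th diagonal block is `F_x^(i)` (hyp `hXdiag`) and all of
whose off-diagonal entries are unknowns (hyp `hXoff`).  Suppose each sub-problem has a
(not necessarily optimal) scalar linear code of length `r i`: matrices `G i`, `D i` with
`D i * G i ≈ F_x^(i)`.  Then, with `G_E` formed by concatenating the `G i` padded with
`rmax − r i` zero rows (`rmax = max_i r i`), there exists `D_E` with `D_E * G_E ≈ F_x^E`;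
i.e. the zero-padded symbol-wise sum of the individual codes is a scalar linear index code
of length `rmax` for `F_x^E`. -/
theorem stmt5 (K : Type*) [Field K] [Fintype K]
    (u : ℕ) (nn mm r : Fin (u + 1) → ℕ)
    (f : ∀ s, Fin (nn s) → Fin (mm s))
    (χ : ∀ s, Fin (nn s) → Set (Fin (mm s)))
    (hχ : ∀ s k, f s k ∉ χ s k)
    (G : ∀ s, Matrix (Fin (r s)) (Fin (mm s)) K)
    (D : ∀ s, Matrix (Fin (nn s)) (Fin (r s)) K)
    (hDG : ∀ s, Completes (f s) (χ s) (D s * G s))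
    (X : (Σ s, Fin (nn s)) → Set (Σ s, Fin (mm s)))
    (hXdiag : ∀ s (k : Fin (nn s)) (j : Fin (mm s)),
      (⟨s, j⟩ : Σ s, Fin (mm s)) ∈ X ⟨s, k⟩ ↔ j ∈ χ s k)
    (hXoff : ∀ s t, s ≠ t → ∀ (k : Fin (nn s)) (c : Fin (mm t)),
      (⟨t, c⟩ : Σ s, Fin (mm s)) ∈ X ⟨s, k⟩) :
    ∃ DE : Matrix (Σ s, Fin (nn s)) (Fin (Finset.univ.sup r)) K,
      Completes (fun p : Σ s, Fin (nn s) => (⟨p.1, f p.1 p.2⟩ : Σ s, Fin (mm s))) X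
        (DE * Matrix.of fun (a : Fin (Finset.univ.sup r)) (q : Σ s, Fin (mm s)) =>
          if h : (a : ℕ) < r q.1 then G q.1 ⟨a, h⟩ q.2 else 0) := by
  set N := Finset.univ.sup r with hN
  have hrN : ∀ s, r s ≤ N := fun s => Finset.le_sup (Finset.mem_univ s)
  set DE : Matrix (Σ s, Fin (nn s)) (Fin N) K :=
    Matrix.of fun (p : Σ s, Fin (nn s)) (a : Fin N) =>
      if h : (a : ℕ) < r p.1 then D p.1 p.2 ⟨a, h⟩ else 0 with hDE
  have key : ∀ (s : Fin (u + 1)) (k : Fin (nn s)) (j : Fin (mm s)),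
      (DE * Matrix.of fun (a : Fin N) (q : Σ s, Fin (mm s)) =>
          if h : (a : ℕ) < r q.1 then G q.1 ⟨a, h⟩ q.2 else 0)
        ⟨s, k⟩ ⟨s, j⟩ = (D s * G s) k j := by
    intro s k j
    rw [Matrix.mul_apply, Matrix.mul_apply]
    set g : ℕ → K := fun a =>
      if h : a < r s then D s k ⟨a, h⟩ * G s ⟨a, h⟩ j else 0 with hg
    have h1 : ∀ a : Fin N,
        DE ⟨s, k⟩ a *
          (Matrix.of fun (a : Fin N) (q : Σ s, Fin (mm s)) =>
            if h : (a : ℕ) < r q.1 then G q.1 ⟨a, h⟩ q.2 else 0) a ⟨s, j⟩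
          = g (a : ℕ) := by
      intro a
      simp only [hDE, hg, Matrix.of_apply]
      split_ifs <;> simp
    rw [Finset.sum_congr rfl fun a _ => h1 a]
    have h2 : ∀ b : Fin (r s), D s k b * G s b j = g (b : ℕ) := by
      intro b
      simp only [hg]
      rw [dif_pos b.isLt]
    rw [Finset.sum_congr rfl fun b _ => h2 b]
    rw [Fin.sum_univ_eq_sum_range g N, Fin.sum_univ_eq_sum_range g (r s)]
    refine (Finset.sum_subset (Finset.range_subset_range.2 (hrN s)) ?_).symm
    intro a _ ha
    simp only [Finset.mem_range, not_lt] at ha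
    simp [hg, Nat.not_lt.2 ha]
  refine ⟨DE, ?_, ?_⟩
  · rintro ⟨s, k⟩
    simpa using (key s k (f s k)).trans ((hDG s).1 k)
  · rintro ⟨s, k⟩ ⟨t, j⟩ hne hnot
    rcases eq_or_ne s t with rfl | hst
    · refine (key s k j).trans ((hDG s).2 k j ?_ ?_)
      · intro h; exact hne (by simp [h])
      · intro h; exact hnot ((hXdiag s k j).2 h)
    · exact absurd (hXoff s t hst k j) hnot
end

section
/- For any TGICP I and any scalar linear two-sender code (G^{(1)}, G^{(2)}) for I with lengths l_1, l_2: l_1 ≥ mrk_1, l_2 ≥ mrk_2, and l_1 + l_2 ≥ mrk_{12}. Consequently l*_q(I) ≥ max{mrk_1 + mrk_2, mrk_{12}}. -/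
open scoped Classical

section AuxStmt8

variable {K : Type*} [Field K]

/-- A linear functional vanishing on the kernel of `φ` factors through `φ`. -/
private lemma aux_factor_through {V W : Type*} [AddCommGroup V] [Module K V]
    [AddCommGroup W] [Module K W] (φ : V →ₗ[K] W) (g : V →ₗ[K] K)
    (h : ∀ x, φ x = 0 → g x = 0) : ∃ ψ : W →ₗ[K] K, ∀ x, ψ (φ x) = g x := by
  have hle : LinearMap.ker φ ≤ LinearMap.ker g := fun x hx => h x hx
  set p := LinearMap.ker φ with hp
  have hker : LinearMap.ker (p.liftQ φ le_rfl) = ⊥ :=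
    Submodule.ker_liftQ_eq_bot _ _ _ le_rfl
  obtain ⟨σ, hσ⟩ := (p.liftQ φ le_rfl).exists_leftInverse_of_injective hker
  refine ⟨(p.liftQ g hle).comp σ, fun x => ?_⟩
  have h1 : φ x = (p.liftQ φ le_rfl) (Submodule.Quotient.mk x) := by
    rw [Submodule.liftQ_apply]
  calc (p.liftQ g hle) (σ (φ x))
      = (p.liftQ g hle) ((σ.comp (p.liftQ φ le_rfl)) (Submodule.Quotient.mk x)) := by
        rw [h1]; rfl
    _ = (p.liftQ g hle) (Submodule.Quotient.mk x) := by rw [hσ]; rfl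
    _ = g x := Submodule.liftQ_apply _ _ _

/-- Rank of a matrix whose rows factor through `J` coordinates is at most `|J|`. -/
private lemma aux_rank_le_of_factor {R P J : Type*} [Fintype P] [Fintype J]
    (A : Matrix R P K) (C : Matrix J P K)
    (h : ∀ i, ∃ u : J → K, ∀ j, A i j = ∑ k, u k * C k j) :
    A.rank ≤ Fintype.card J := by
  choose u hu using h
  have hA : A = Matrix.of u * C := by
    ext i j
    rw [Matrix.mul_apply]
    exact hu i j
  rw [hA]
  exact (Matrix.rank_mul_le_right _ _).trans (Matrix.rank_le_card_height C)

variable {m : ℕ}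

private lemma aux_restrict_zero (S : Set (Fin m)) (j : Fin m) (hj : j ∉ S) :
    (fun t : ↥S => (Pi.single j 1 : Fin m → K) t.1) = 0 := by
  funext t
  have ht : t.1 ≠ j := fun h => hj (h ▸ t.2)
  simp [Pi.single_apply, ht]

private lemma aux_restrict_single (S : Set (Fin m)) (j : Fin m) (hj : j ∈ S) :
    (fun t : ↥S => (Pi.single j 1 : Fin m → K) t.1) = (Pi.single (⟨j, hj⟩ : ↥S) 1 : ↥S → K) := by
  funext t
  simp [Pi.single_apply, Subtype.ext_iff]

private lemma aux_psi_mulVec {l : ℕ} {S : Set (Fin m)} (ψ : (Fin l → K) →ₗ[K] K)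
    (G : Matrix (Fin l) ↥S K) (t0 : ↥S) :
    ψ (G.mulVec (Pi.single t0 1)) =
      ∑ k, ψ (fun t => if k = t then 1 else 0) * G k t0 := by
  rw [Matrix.mulVec_single, LinearMap.pi_apply_eq_sum_univ ψ]
  exact Finset.sum_congr rfl fun k _ => by rw [smul_eq_mul]; simp [Matrix.col, mul_comm]

/-- From a two-sender decoding function for receiver demanding `x f0`, extract linear
functionals realizing the decoding. -/
private lemma aux_exists_psi {l1 l2 : ℕ} (M1 M2 S : Set (Fin m))
    (G1 : Matrix (Fin l1) ↥M1 K) (G2 : Matrix (Fin l2) ↥M2 K) (f0 : Fin m)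
    (D : (Fin l1 → K) → (Fin l2 → K) → (↥S → K) → K)
    (hD : ∀ x : Fin m → K,
      D (G1.mulVec fun j => x j.1) (G2.mulVec fun j => x j.1) (fun j => x j.1) = x f0) :
    ∃ (ψ1 : (Fin l1 → K) →ₗ[K] K) (ψ2 : (Fin l2 → K) →ₗ[K] K) (ψχ : (↥S → K) →ₗ[K] K),
      ∀ x : Fin m → K,
        ψ1 (G1.mulVec fun j => x j.1) + ψ2 (G2.mulVec fun j => x j.1)
          + ψχ (fun j => x j.1) = x f0 := by
  set φ : (Fin m → K) →ₗ[K] (Fin l1 → K) × ((Fin l2 → K) × (↥S → K)) :=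
    LinearMap.prod (G1.mulVecLin.comp (LinearMap.funLeft K K (fun j : ↥M1 => j.1)))
      (LinearMap.prod (G2.mulVecLin.comp (LinearMap.funLeft K K (fun j : ↥M2 => j.1)))
        (LinearMap.funLeft K K (fun j : ↥S => j.1))) with hφ
  have hφx : ∀ x : Fin m → K,
      φ x = (G1.mulVec fun j => x j.1, (G2.mulVec fun j => x j.1, fun j => x j.1)) := by
    intro x; rfl
  have hzero : ∀ x : Fin m → K, φ x = 0 →
      (LinearMap.proj f0 : (Fin m → K) →ₗ[K] K) x = 0 := by
    intro x hx
    rw [hφx] at hx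
    have h1 := congrArg Prod.fst hx
    have h2 := congrArg (fun p => p.2.1) hx
    have h3 := congrArg (fun p => p.2.2) hx
    simp only at h1 h2 h3
    have hx0 : x f0 = D 0 0 0 := by rw [← hD x, h1, h2, h3]; rfl
    have h0 : D 0 0 0 = (0 : K) := by
      have h := hD 0
      rw [show (fun j : ↥M1 => (0 : Fin m → K) j.1) = 0 from rfl,
        show (fun j : ↥M2 => (0 : Fin m → K) j.1) = 0 from rfl,
        show (fun j : ↥S => (0 : Fin m → K) j.1) = 0 from rfl,
        Matrix.mulVec_zero, Matrix.mulVec_zero] at h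
      simpa using h
    simpa using hx0.trans h0
  obtain ⟨ψ, hψ⟩ := aux_factor_through φ (LinearMap.proj f0) hzero
  refine ⟨ψ.comp (LinearMap.inl K _ _),
    ψ.comp ((LinearMap.inr K _ _).comp (LinearMap.inl K _ _)),
    ψ.comp ((LinearMap.inr K _ _).comp (LinearMap.inr K _ _)), fun x => ?_⟩
  have hx := hψ x
  rw [hφx] at hx
  simp only [LinearMap.comp_apply, LinearMap.inl_apply, LinearMap.inr_apply,
    LinearMap.proj_apply] at hx ⊢
  rw [← hx, ← map_add, ← map_add]
  congr 1
  simp [Prod.ext_iff]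

end AuxStmt8

section MainAux

variable {K : Type*} [Field K] {m n : ℕ}

/-- The matrix built from decoding functionals completes the fitting matrix of the
sub-problem on any message set `P`. -/
private lemma aux_completes (I : TGICP m n) {l1 l2 : ℕ}
    (G1 : Matrix (Fin l1) ↥I.M1 K) (G2 : Matrix (Fin l2) ↥I.M2 K)
    (ψ1 : Fin n → (Fin l1 → K) →ₗ[K] K) (ψ2 : Fin n → (Fin l2 → K) →ₗ[K] K)
    (ψχ : ∀ i : Fin n, (↥(I.χ i) → K) →ₗ[K] K)
    (hψ : ∀ (i : Fin n) (x : Fin m → K),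
      ψ1 i (G1.mulVec fun j => x j.1) + ψ2 i (G2.mulVec fun j => x j.1)
        + ψχ i (fun j => x j.1) = x (I.f i))
    (P : Set (Fin m)) :
    Completes (fun i : {i : Fin n // I.f i ∈ P} => (⟨I.f i.1, i.2⟩ : ↥P))
      (fun i => {j : ↥P | j.1 ∈ I.χ i.1})
      (fun i j => ψ1 i.1 (G1.mulVec fun t => (Pi.single j.1 1 : Fin m → K) t.1)
        + ψ2 i.1 (G2.mulVec fun t => (Pi.single j.1 1 : Fin m → K) t.1)) := by
  have key : ∀ (i : {i : Fin n // I.f i ∈ P}) (j : ↥P), j.1 ∉ I.χ i.1 →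
      ψ1 i.1 (G1.mulVec fun t => (Pi.single j.1 1 : Fin m → K) t.1)
        + ψ2 i.1 (G2.mulVec fun t => (Pi.single j.1 1 : Fin m → K) t.1)
        = (Pi.single j.1 1 : Fin m → K) (I.f i.1) := by
    intro i j hjχ
    have h := hψ i.1 (Pi.single j.1 1 : Fin m → K)
    rw [aux_restrict_zero (I.χ i.1) j.1 hjχ, map_zero, add_zero] at h
    exact h
  constructor
  · intro i
    simpa using key i ⟨I.f i.1, i.2⟩ (I.not_mem i.1)
  · intro i j hne hjχ
    have hj1 : j.1 ≠ I.f i.1 := fun h => hne (Subtype.ext h)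
    simpa [Pi.single_apply, hj1, hj1.symm] using key i j hjχ


/-- Combining a completion with a factorization gives the minrank bound. -/
private lemma aux_mrk_le (I : TGICP m n) (P : Set (Fin m)) {J : Type*} [Fintype J]
    (A : Matrix {i : Fin n // I.f i ∈ P} ↥P K) (C : Matrix J ↥P K)
    (hcomp : Completes (fun i : {i : Fin n // I.f i ∈ P} => (⟨I.f i.1, i.2⟩ : ↥P))
      (fun i => {j : ↥P | j.1 ∈ I.χ i.1}) A)
    (hfac : ∀ i, ∃ u : J → K, ∀ j, A i j = ∑ k, u k * C k j) :
    I.mrk K P ≤ Fintype.card J :=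
  le_trans (Nat.sInf_le ⟨A, hcomp, rfl⟩) (aux_rank_le_of_factor A C hfac)

end MainAux



/-- lower bounds.  For any TGICP `I` and any scalar linear two-sender code
`(G1, G2)` for `I` with lengths `l1, l2`: `l1 ≥ mrk_1`, `l2 ≥ mrk_2`, and
`l1 + l2 ≥ mrk_{12}`.  Consequently `l*_q(I) ≥ max (mrk_1 + mrk_2) mrk_{12}`. -/
theorem stmt8 (K : Type*) [Field K] [Fintype K] {m n : ℕ} (I : TGICP m n) :
    (∀ (l1 l2 : ℕ) (G1 : Matrix (Fin l1) ↥I.M1 K) (G2 : Matrix (Fin l2) ↥I.M2 K),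
      I.IsCode K G1 G2 →
        I.mrk K (I.M1 \ I.M2) ≤ l1 ∧ I.mrk K (I.M2 \ I.M1) ≤ l2 ∧
          I.mrk K (I.M1 ∩ I.M2) ≤ l1 + l2) ∧
    max (I.mrk K (I.M1 \ I.M2) + I.mrk K (I.M2 \ I.M1)) (I.mrk K (I.M1 ∩ I.M2))
      ≤ I.optLen K := by
  classical
  have key : ∀ (l1 l2 : ℕ) (G1 : Matrix (Fin l1) ↥I.M1 K) (G2 : Matrix (Fin l2) ↥I.M2 K),
      I.IsCode K G1 G2 →
        I.mrk K (I.M1 \ I.M2) ≤ l1 ∧ I.mrk K (I.M2 \ I.M1) ≤ l2 ∧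
          I.mrk K (I.M1 ∩ I.M2) ≤ l1 + l2 := by
    intro l1 l2 G1 G2 hc
    choose D hD using hc
    choose ψ1 ψ2 ψχ hψ using fun i : Fin n =>
      aux_exists_psi I.M1 I.M2 (I.χ i) G1 G2 (I.f i) (D i) (hD i)
    refine ⟨?_, ?_, ?_⟩
    · -- sender 1 bound
      have hcomp := aux_completes I G1 G2 ψ1 ψ2 ψχ hψ (I.M1 \ I.M2)
      have hfac : ∀ i : {i : Fin n // I.f i ∈ I.M1 \ I.M2}, ∃ u : Fin l1 → K,
          ∀ j : ↥(I.M1 \ I.M2),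
            (ψ1 i.1 (G1.mulVec fun t => (Pi.single j.1 1 : Fin m → K) t.1)
              + ψ2 i.1 (G2.mulVec fun t => (Pi.single j.1 1 : Fin m → K) t.1))
            = ∑ k, u k * G1 k ⟨j.1, j.2.1⟩ := by
        intro i
        refine ⟨fun k => ψ1 i.1 (fun t => if k = t then 1 else 0), fun j => ?_⟩
        rw [aux_restrict_zero I.M2 j.1 j.2.2, Matrix.mulVec_zero, map_zero, add_zero,
          aux_restrict_single I.M1 j.1 j.2.1, aux_psi_mulVec]
      simpa using aux_mrk_le I (I.M1 \ I.M2) _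
        (fun k (j : ↥(I.M1 \ I.M2)) => G1 k ⟨j.1, j.2.1⟩) hcomp hfac
    · -- sender 2 bound
      have hcomp := aux_completes I G1 G2 ψ1 ψ2 ψχ hψ (I.M2 \ I.M1)
      have hfac : ∀ i : {i : Fin n // I.f i ∈ I.M2 \ I.M1}, ∃ u : Fin l2 → K,
          ∀ j : ↥(I.M2 \ I.M1),
            (ψ1 i.1 (G1.mulVec fun t => (Pi.single j.1 1 : Fin m → K) t.1)
              + ψ2 i.1 (G2.mulVec fun t => (Pi.single j.1 1 : Fin m → K) t.1))
            = ∑ k, u k * G2 k ⟨j.1, j.2.1⟩ := by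
        intro i
        refine ⟨fun k => ψ2 i.1 (fun t => if k = t then 1 else 0), fun j => ?_⟩
        rw [aux_restrict_zero I.M1 j.1 j.2.2, Matrix.mulVec_zero, map_zero, zero_add,
          aux_restrict_single I.M2 j.1 j.2.1, aux_psi_mulVec]
      simpa using aux_mrk_le I (I.M2 \ I.M1) _
        (fun k (j : ↥(I.M2 \ I.M1)) => G2 k ⟨j.1, j.2.1⟩) hcomp hfac
    · -- joint bound
      have hcomp := aux_completes I G1 G2 ψ1 ψ2 ψχ hψ (I.M1 ∩ I.M2)
      have hfac : ∀ i : {i : Fin n // I.f i ∈ I.M1 ∩ I.M2}, ∃ u : Fin l1 ⊕ Fin l2 → K,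
          ∀ j : ↥(I.M1 ∩ I.M2),
            (ψ1 i.1 (G1.mulVec fun t => (Pi.single j.1 1 : Fin m → K) t.1)
              + ψ2 i.1 (G2.mulVec fun t => (Pi.single j.1 1 : Fin m → K) t.1))
            = ∑ k, u k
              * (Sum.elim (fun k => G1 k ⟨j.1, j.2.1⟩) (fun k => G2 k ⟨j.1, j.2.2⟩)) k := by
        intro i
        refine ⟨Sum.elim (fun k => ψ1 i.1 (fun t => if k = t then 1 else 0))
          (fun k => ψ2 i.1 (fun t => if k = t then 1 else 0)), fun j => ?_⟩
        rw [aux_restrict_single I.M1 j.1 j.2.1, aux_restrict_single I.M2 j.1 j.2.2,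
          aux_psi_mulVec, aux_psi_mulVec, Fintype.sum_sum_type]
        simp
      simpa using aux_mrk_le I (I.M1 ∩ I.M2) _
        (fun k (j : ↥(I.M1 ∩ I.M2)) =>
          (Sum.elim (fun k => G1 k ⟨j.1, j.2.1⟩) (fun k => G2 k ⟨j.1, j.2.2⟩)) k) hcomp hfac
  refine ⟨key, ?_⟩
  have hcov : ∀ j : Fin m, j ∈ I.M1 ∨ j ∈ I.M2 := fun j => by
    have hj : j ∈ I.M1 ∪ I.M2 := by rw [I.cover]; trivial
    exact hj
  have hmv : ∀ (S : Set (Fin m)) (x : Fin m → K) (k : Fin (Fintype.card ↥S)),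
      (Matrix.of fun k t => if t = (Fintype.equivFin ↥S).symm k then (1 : K) else 0).mulVec
        (fun j : ↥S => x j.1) k = x ((Fintype.equivFin ↥S).symm k).1 := by
    intro S x k
    simp [Matrix.mulVec, dotProduct, ite_mul, Finset.sum_ite_eq']
  have hne : Set.Nonempty {L | ∃ (l1 l2 : ℕ) (G1 : Matrix (Fin l1) ↥I.M1 K)
      (G2 : Matrix (Fin l2) ↥I.M2 K), I.IsCode K G1 G2 ∧ L = l1 + l2} := by
    refine ⟨Fintype.card ↥I.M1 + Fintype.card ↥I.M2,
      Fintype.card ↥I.M1, Fintype.card ↥I.M2,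
      Matrix.of (fun k t => if t = (Fintype.equivFin ↥I.M1).symm k then (1 : K) else 0),
      Matrix.of (fun k t => if t = (Fintype.equivFin ↥I.M2).symm k then (1 : K) else 0),
      ?_, rfl⟩
    intro i
    refine ⟨fun a b _ => if h : I.f i ∈ I.M1 then a ((Fintype.equivFin ↥I.M1) ⟨I.f i, h⟩)
      else b ((Fintype.equivFin ↥I.M2) ⟨I.f i, (hcov (I.f i)).resolve_left h⟩),
      fun x => ?_⟩
    by_cases h : I.f i ∈ I.M1
    · simp only [dif_pos h]
      rw [hmv, Equiv.symm_apply_apply]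
    · simp only [dif_neg h]
      rw [hmv, Equiv.symm_apply_apply]
  refine le_csInf hne ?_
  rintro L ⟨l1, l2, G1, G2, hc, rfl⟩
  obtain ⟨h1, h2, h12⟩ := key l1 l2 G1 G2 hc
  exact max_le (add_le_add h1 h2) h12
end

section
/- Let I be a TGICP such that for each i ∈ {1,2}, mrk_q(F̃_x^{(i)}) = max{mrk_i, mrk_{12}} (as holds when F̃_x^{(i)} is a joint extension of F_x^{(i)} and F_x^{(12)} of the type constructed in the joint-extension theorem with minrank-achieving completions, using the same completion of F_x^{(12)} for both). If mrk_{12} > max{mrk_1, mrk_2}, then l*_q(I) ≤ mrk_{12} + min{mrk_1, mrk_2}. -/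
open scoped Classical

private lemma sum_dite_subtype {α β : Type*} [Fintype α] [AddCommMonoid β]
    {P Q : Set α} (hPQ : P ⊆ Q) (g : ↥P → β) :
    (∑ j : ↥Q, if h : (j : α) ∈ P then g ⟨j, h⟩ else 0) = ∑ j : ↥P, g j := by
  classical
  let emb : ↥P ↪ ↥Q :=
    ⟨fun j => ⟨j.1, hPQ j.2⟩, fun a b hab => by simpa [Subtype.ext_iff] using hab⟩
  rw [show (∑ j : ↥P, g j) =
      ∑ j ∈ Finset.univ.map emb, (if h : (j : α) ∈ P then g ⟨j, h⟩ else 0) by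
    rw [Finset.sum_map]
    exact Finset.sum_congr rfl fun j _ => by rw [dif_pos (show ((emb j : ↥Q) : α) ∈ P from j.2)]; rfl]
  refine (Finset.sum_subset (Finset.subset_univ _) fun j _ hj => ?_).symm
  rw [dif_neg]
  intro h
  exact hj (Finset.mem_map.2 ⟨⟨j.1, h⟩, Finset.mem_univ _, Subtype.ext rfl⟩)

private lemma exists_code {K : Type*} [Field K] {R M : Type*} [Finite R] [Fintype M]
    (f : R → M) (χ : R → Set M) :
    ∃ G : Matrix (Fin (minrk K f χ)) M K,
      ∀ i, ∃ D : (Fin (minrk K f χ) → K) → (↥(χ i) → K) → K,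
        ∀ x : M → K, D (G.mulVec x) (fun j => x j) = x (f i) := by
  classical
  have hne : {r | ∃ A : Matrix R M K, Completes f χ A ∧ A.rank = r}.Nonempty :=
    ⟨_, Matrix.of (fun i j => if j = f i then 1 else 0),
      ⟨fun i => if_pos rfl, fun i j hj _ => if_neg hj⟩, rfl⟩
  obtain ⟨A, hA, hrk⟩ := Nat.sInf_mem hne
  set r := minrk K f χ with hr
  set W := Submodule.span K (Set.range A) with hW
  have hfr : Module.finrank K W = r :=
    (Matrix.rank_eq_finrank_span_row A).symm.trans hrk
  let b : Module.Basis (Fin r) K W := Module.finBasisOfFinrankEq K W hfr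
  refine ⟨Matrix.of (fun k j => (b k : M → K) j), fun i => ?_⟩
  have hmem : A i ∈ W := Submodule.subset_span (Set.mem_range_self i)
  set c : Fin r → K := fun k => b.repr ⟨A i, hmem⟩ k with hc
  have hrow : ∀ j, A i j = ∑ k, c k * (b k : M → K) j := by
    intro j
    have hs := b.sum_repr ⟨A i, hmem⟩
    calc A i j = ((⟨A i, hmem⟩ : W) : M → K) j := rfl
      _ = (((∑ k, c k • b k : W)) : M → K) j := by rw [hs]
      _ = ∑ k, c k * (b k : M → K) j := by
          rw [Submodule.coe_sum]
          simp [Finset.sum_apply]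
  refine ⟨fun y z => (∑ k, c k * y k) -
      ∑ j : M, if h : j ∈ χ i ∧ j ≠ f i then A i j * z ⟨j, h.1⟩ else 0, fun x => ?_⟩
  have h1 : (∑ k, c k * (Matrix.of (fun k j => (b k : M → K) j)).mulVec x k)
      = ∑ j, A i j * x j := by
    simp only [Matrix.mulVec, dotProduct, Matrix.of_apply]
    calc ∑ k, c k * ∑ j, (b k : M → K) j * x j
        = ∑ k, ∑ j, c k * ((b k : M → K) j * x j) := by simp [Finset.mul_sum]
      _ = ∑ j, ∑ k, c k * ((b k : M → K) j * x j) := Finset.sum_comm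
      _ = ∑ j, (∑ k, c k * (b k : M → K) j) * x j := by
          simp [Finset.sum_mul, mul_assoc]
      _ = ∑ j, A i j * x j := by
          exact Finset.sum_congr rfl fun j _ => by rw [← hrow]
  have h2 : ∀ j : M, A i j * x j -
      (if h : j ∈ χ i ∧ j ≠ f i then A i j * x j else 0)
      = if j = f i then x (f i) else 0 := by
    intro j
    by_cases hj : j = f i
    · subst hj
      rw [dif_neg (by simp), if_pos rfl, hA.1 i, one_mul, sub_zero]
    · rw [if_neg hj]
      by_cases hχ : j ∈ χ i
      · rw [dif_pos ⟨hχ, hj⟩, sub_self]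
      · rw [dif_neg (by tauto), hA.2 i j hj hχ, zero_mul, sub_zero]
  calc (∑ k, c k * (Matrix.of (fun k j => (b k : M → K) j)).mulVec x k) -
        ∑ j : M, (if h : j ∈ χ i ∧ j ≠ f i then A i j * (fun j : ↥(χ i) => x j) ⟨j, h.1⟩ else 0)
      = ∑ j, (A i j * x j - if h : j ∈ χ i ∧ j ≠ f i then A i j * x j else 0) := by
        rw [h1, Finset.sum_sub_distrib]
    _ = ∑ j, if j = f i then x (f i) else 0 := Finset.sum_congr rfl fun j _ => h2 j
    _ = x (f i) := by simp

private lemma optLen_le_core {K : Type*} [Field K] {m n : ℕ} (I : TGICP m n)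
    {Q1 Q2 : Set (Fin m)} (hQ1 : Q1 ⊆ I.M1) (hQ2 : Q2 ⊆ I.M2)
    (hcov : ∀ i, I.f i ∉ Q1 → I.f i ∈ Q2) :
    I.optLen K ≤ I.mrk K Q1 + I.mrk K Q2 := by
  classical
  obtain ⟨G1, hG1⟩ := exists_code (K := K)
    (fun i : {i : Fin n // I.f i ∈ Q1} => (⟨I.f i.1, i.2⟩ : ↥Q1))
    (fun i => {j : ↥Q1 | (j : Fin m) ∈ I.χ i.1})
  obtain ⟨G2, hG2⟩ := exists_code (K := K)
    (fun i : {i : Fin n // I.f i ∈ Q2} => (⟨I.f i.1, i.2⟩ : ↥Q2))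
    (fun i => {j : ↥Q2 | (j : Fin m) ∈ I.χ i.1})
  refine Nat.sInf_le ⟨_, _,
    Matrix.of (fun k (j : ↥I.M1) => if h : (j : Fin m) ∈ Q1 then G1 k ⟨j, h⟩ else 0),
    Matrix.of (fun k (j : ↥I.M2) => if h : (j : Fin m) ∈ Q2 then G2 k ⟨j, h⟩ else 0),
    fun i => ?_, rfl⟩
  by_cases hi : I.f i ∈ Q1
  · obtain ⟨D, hD⟩ := hG1 ⟨i, hi⟩
    refine ⟨fun y1 _ z => D y1 (fun j => z ⟨j.1.1, j.2⟩), fun x => ?_⟩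
    have key : (Matrix.of (fun k (j : ↥I.M1) =>
        if h : (j : Fin m) ∈ Q1 then G1 k ⟨j, h⟩ else 0)).mulVec (fun j : ↥I.M1 => x j)
        = G1.mulVec (fun j : ↥Q1 => x j) := by
      funext k
      simp only [Matrix.mulVec, dotProduct, Matrix.of_apply]
      rw [← sum_dite_subtype hQ1 (fun j : ↥Q1 => G1 k j * x j)]
      exact Finset.sum_congr rfl fun j _ => by split <;> simp
    simp only [key]
    exact hD (fun j : ↥Q1 => x j)
  · obtain ⟨D, hD⟩ := hG2 ⟨i, hcov i hi⟩
    refine ⟨fun _ y2 z => D y2 (fun j => z ⟨j.1.1, j.2⟩), fun x => ?_⟩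
    have key : (Matrix.of (fun k (j : ↥I.M2) =>
        if h : (j : Fin m) ∈ Q2 then G2 k ⟨j, h⟩ else 0)).mulVec (fun j : ↥I.M2 => x j)
        = G2.mulVec (fun j : ↥Q2 => x j) := by
      funext k
      simp only [Matrix.mulVec, dotProduct, Matrix.of_apply]
      rw [← sum_dite_subtype hQ2 (fun j : ↥Q2 => G2 k j * x j)]
      exact Finset.sum_congr rfl fun j _ => by split <;> simp
    simp only [key]
    exact hD (fun j : ↥Q2 => x j)

/-- Case II-B via joint extensions, part (i).
Let `I` be a TGICP such that for each `i ∈ {1,2}` the SGICP `F̃_x^(i)` formed by the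
receivers of `I_i` and `I_{12}` together (message set `P_i ∪ P_{12}`) satisfies
`mrk_q(F̃_x^(i)) = max mrk_i mrk_{12}` (as holds for joint extensions of the type of the
joint-extension theorem with minrank-achieving completions).  If
`mrk_{12} > max mrk_1 mrk_2`, then `l*_q(I) ≤ mrk_{12} + min mrk_1 mrk_2`. -/
theorem stmt10 (K : Type*) [Field K] [Fintype K] {m n : ℕ} (I : TGICP m n)
    (h1 : I.mrk K ((I.M1 \ I.M2) ∪ (I.M1 ∩ I.M2)) =
      max (I.mrk K (I.M1 \ I.M2)) (I.mrk K (I.M1 ∩ I.M2)))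
    (h2 : I.mrk K ((I.M2 \ I.M1) ∪ (I.M1 ∩ I.M2)) =
      max (I.mrk K (I.M2 \ I.M1)) (I.mrk K (I.M1 ∩ I.M2)))
    (hgt : max (I.mrk K (I.M1 \ I.M2)) (I.mrk K (I.M2 \ I.M1)) < I.mrk K (I.M1 ∩ I.M2)) :
    I.optLen K ≤
      I.mrk K (I.M1 ∩ I.M2) + min (I.mrk K (I.M1 \ I.M2)) (I.mrk K (I.M2 \ I.M1)) := by
  classical
  have hu : ∀ i, I.f i ∈ I.M1 ∪ I.M2 := fun i => I.cover ▸ Set.mem_univ _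
  rcases le_total (I.mrk K (I.M1 \ I.M2)) (I.mrk K (I.M2 \ I.M1)) with hab | hab
  · have h2' : I.mrk K ((I.M2 \ I.M1) ∪ (I.M1 ∩ I.M2)) = I.mrk K (I.M1 ∩ I.M2) := by
      rw [h2]
      exact max_eq_right ((le_max_right _ _).trans hgt.le)
    have hb := optLen_le_core (K := K) I (Q1 := I.M1 \ I.M2)
      (Q2 := (I.M2 \ I.M1) ∪ (I.M1 ∩ I.M2)) Set.diff_subset
      (Set.union_subset Set.diff_subset Set.inter_subset_right) ?_
    · rw [h2'] at hb
      rw [min_eq_left hab]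
      omega
    · intro i hi
      have := hu i
      simp only [Set.mem_union, Set.mem_diff, Set.mem_inter_iff] at *
      tauto
  · have h1' : I.mrk K ((I.M1 \ I.M2) ∪ (I.M1 ∩ I.M2)) = I.mrk K (I.M1 ∩ I.M2) := by
      rw [h1]
      exact max_eq_right ((le_max_left _ _).trans hgt.le)
    have hb := optLen_le_core (K := K) I (Q1 := (I.M1 \ I.M2) ∪ (I.M1 ∩ I.M2))
      (Q2 := I.M2 \ I.M1)
      (Set.union_subset Set.diff_subset Set.inter_subset_left) Set.diff_subset ?_
    · rw [h1'] at hb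
      rw [min_eq_right hab]
      omega
    · intro i hi
      have := hu i
      simp only [Set.mem_union, Set.mem_diff, Set.mem_inter_iff] at *
      tauto
end

section
/- Let I be a TGICP such that for each i ∈ {1,2}, mrk_q(F̃_x^{(i)}) = max{mrk_i, mrk_{12}} (as holds when F̃_x^{(i)} is a joint extension of F_x^{(i)} and F_x^{(12)} of the type constructed in the joint-extension theorem with minrank-achieving completions, using the same completion of F_x^{(12)} for both). If mrk_{12} ≤ max{mrk_1, mrk_2}, then l*_q(I) = mrk_1 + mrk_2. -/
open scoped Classical

lemma sum_pad {α K : Type*} [Fintype α] [AddCommMonoid K]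
    {S T : Set α} (hTS : T ⊆ S) (F : α → K) (hF : ∀ j ∈ S, j ∉ T → F j = 0) :
    ∑ j : ↥S, F j.1 = ∑ j : ↥T, F j.1 := by
  rw [Finset.sum_set_coe, Finset.sum_set_coe]
  refine (Finset.sum_subset ?_ ?_).symm
  · intro x hx; rw [Set.mem_toFinset] at *; exact hTS hx
  · intro x hx hx'; rw [Set.mem_toFinset] at *; exact hF x hx hx'

lemma exists_row_factor {K R M : Type*} [Field K] [Fintype R] [Fintype M]
    (A : Matrix R M K) :
    ∃ (G : Matrix (Fin A.rank) M K) (C : Matrix R (Fin A.rank) K), A = C * G := by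
  classical
  have hfin : Module.finrank K (LinearMap.range A.transpose.mulVecLin) = A.rank := by
    rw [← Matrix.rank_transpose A]; rfl
  let b : Module.Basis (Fin A.rank) K (LinearMap.range A.transpose.mulVecLin) :=
    Module.finBasisOfFinrankEq K _ hfin
  have hmem : ∀ i : R, (fun j => A i j) ∈ LinearMap.range A.transpose.mulVecLin := by
    intro i
    refine ⟨Pi.single i 1, ?_⟩
    rw [Matrix.mulVecLin_apply, Matrix.mulVec_single]
    funext j; simp [Matrix.transpose_apply]
  refine ⟨fun k j => (b k).1 j, fun i k => b.repr ⟨fun j => A i j, hmem i⟩ k, ?_⟩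
  ext i j
  have h2 : A i j = (((∑ k, b.repr ⟨fun j' => A i j', hmem i⟩ k • b k :
      LinearMap.range A.transpose.mulVecLin) : M → K) j) := by
    rw [b.sum_repr]
  change A i j = ∑ k, b.repr ⟨fun j => A i j, hmem i⟩ k * (b k).1 j
  exact h2.trans (by rw [Submodule.coe_sum, Finset.sum_apply]; simp only [Submodule.coe_smul, Pi.smul_apply, smul_eq_mul])

lemma exists_factor_of_ker_le {K V W : Type*} [Field K] [AddCommGroup V] [Module K V]
    [AddCommGroup W] [Module K W] (L : V →ₗ[K] W) (e : V →ₗ[K] K)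
    (h : LinearMap.ker L ≤ LinearMap.ker e) : ∃ ψ : W →ₗ[K] K, ∀ v, ψ (L v) = e v := by
  obtain ⟨σ, hσ⟩ := L.rangeRestrict.exists_rightInverse_of_surjective
      (LinearMap.range_eq_top.2 L.surjective_rangeRestrict)
  obtain ⟨ψ, hψ⟩ := LinearMap.exists_extend (e ∘ₗ σ)
  refine ⟨ψ, fun v => ?_⟩
  have h1 : ψ (L v) = e (σ ⟨L v, LinearMap.mem_range_self L v⟩) := by
    have := congrFun (congrArg DFunLike.coe hψ) ⟨L v, LinearMap.mem_range_self L v⟩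
    simpa using this
  have h2 : σ ⟨L v, LinearMap.mem_range_self L v⟩ - v ∈ LinearMap.ker L := by
    have h3 := congrFun (congrArg DFunLike.coe hσ) ⟨L v, LinearMap.mem_range_self L v⟩
    have h4 : L (σ ⟨L v, LinearMap.mem_range_self L v⟩) = L v := by
      have := congrArg Subtype.val h3
      simpa [LinearMap.rangeRestrict] using this
    simp [LinearMap.mem_ker, map_sub, h4]
  have := h h2
  rw [LinearMap.mem_ker, map_sub, sub_eq_zero] at this
  rw [h1, this]

lemma minrk_le_of_decoding {K : Type*} [Field K] {M R : Type*} [Fintype M]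
    {f : R → M} {χ : R → Set M}
    (hd : ∀ i, f i ∉ χ i) (l : ℕ) (G : Matrix (Fin l) M K)
    (hdec : ∀ i, ∀ x : M → K, G.mulVec x = 0 → (∀ j ∈ χ i, x j = 0) → x (f i) = 0) :
    minrk K f χ ≤ l := by
  classical
  -- side-information projection
  have key : ∀ i : R, ∃ ψ : ((Fin l → K) × (M → K)) →ₗ[K] K,
      ∀ x : M → K, ψ (G.mulVec x, fun j => if j ∈ χ i then x j else 0) = x (f i) := by
    intro i
    let ind : (M → K) →ₗ[K] (M → K) :=
      { toFun := fun x j => if j ∈ χ i then x j else 0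
        map_add' := by intro x y; funext j; by_cases h : j ∈ χ i <;> simp [h]
        map_smul' := by intro c x; funext j; by_cases h : j ∈ χ i <;> simp [h] }
    let L : (M → K) →ₗ[K] ((Fin l → K) × (M → K)) := LinearMap.prod G.mulVecLin ind
    let e : (M → K) →ₗ[K] K := LinearMap.proj (f i)
    obtain ⟨ψ, hψ⟩ := exists_factor_of_ker_le L e (by
      intro x hx
      rw [LinearMap.mem_ker] at hx ⊢
      have h1 : G.mulVec x = 0 := congrArg Prod.fst hx
      have h2 : ∀ j ∈ χ i, x j = 0 := by
        intro j hj
        have := congrFun (congrArg Prod.snd hx) j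
        simpa [L, ind, hj] using this
      exact hdec i x h1 h2)
    exact ⟨ψ, fun x => hψ x⟩
  choose ψ hψ using key
  -- completion matrix
  set A : Matrix R M K := fun i j => ψ i (G.mulVec (Pi.single j 1), 0) with hA
  have hsingle : ∀ i : R, ∀ j : M, j ∉ χ i →
      A i j = (Pi.single (M := fun _ => K) j 1) (f i) := by
    intro i j hj
    have h0 : (fun j' => if j' ∈ χ i then (Pi.single (M := fun _ => K) j 1) j' else 0) = 0 := by
      funext j'
      by_cases h : j' ∈ χ i
      · simp only [h, if_true]
        rcases eq_or_ne j' j with rfl | hne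
        · exact absurd h hj
        · simp [Pi.single_eq_of_ne hne]
      · simp [h]
    have := hψ i (Pi.single j 1)
    rw [h0] at this
    exact this
  have hcomp : Completes f χ A := by
    constructor
    · intro i
      rw [hsingle i (f i) (hd i), Pi.single_eq_same]
    · intro i j hj hj'
      rw [hsingle i j hj']; exact Pi.single_eq_of_ne (Ne.symm hj) 1
  -- rank bound : A = C * G
  set C : Matrix R (Fin l) K := fun i k =>
    ψ i ((fun k' => if k = k' then 1 else 0), 0) with hC
  have hfact : A = C * G := by
    funext i j
    have h1 : A i j = (ψ i ∘ₗ LinearMap.inl K (Fin l → K) (M → K)) (fun k => G k j) := by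
      simp [hA, Matrix.mulVec_single, LinearMap.inl]; rfl
    rw [h1, LinearMap.pi_apply_eq_sum_univ, Matrix.mul_apply]
    apply Finset.sum_congr rfl
    intro k _
    simp [hC, LinearMap.inl, mul_comm, smul_eq_mul]
  have h1 : minrk K f χ ≤ A.rank := Nat.sInf_le ⟨A, hcomp, rfl⟩
  have h2 : A.rank ≤ G.rank := by rw [hfact]; exact Matrix.rank_mul_le_right C G
  have h3 : G.rank ≤ l := by
    simpa using Matrix.rank_le_card_height G
  omega

lemma minrk_attained {K : Type*} [Field K] {R M : Type*} [Fintype M]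
    (f : R → M) (χ : R → Set M) :
    ∃ A : Matrix R M K, Completes f χ A ∧ A.rank = minrk K f χ := by
  classical
  have hne : {r | ∃ A : Matrix R M K, Completes f χ A ∧ A.rank = r}.Nonempty := by
    exact ⟨_, fun i j => if j = f i then 1 else 0,
      ⟨fun i => if_pos rfl, fun i j hj _ => if_neg hj⟩, rfl⟩
  obtain ⟨A, hA, hr⟩ := Nat.sInf_mem hne
  exact ⟨A, hA, hr⟩

lemma decode_aux {K : Type*} [Field K] {m n : ℕ} (I : TGICP m n) (T : Set (Fin m))
    {l : ℕ} {Gt : Matrix (Fin l) ↥T K} {C : Matrix {i : Fin n // I.f i ∈ T} (Fin l) K}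
    {A : Matrix {i : Fin n // I.f i ∈ T} ↥T K}
    (hA : Completes (fun i : {i : Fin n // I.f i ∈ T} => (⟨I.f i.1, i.2⟩ : ↥T))
      (fun i => {j : ↥T | j.1 ∈ I.χ i.1}) A)
    (hfact : A = C * Gt) (i : Fin n) (hi : I.f i ∈ T) :
    ∃ D : (Fin l → K) → (↥(I.χ i) → K) → K,
      ∀ x : Fin m → K, D (Gt.mulVec fun j => x j.1) (fun j => x j.1) = x (I.f i) := by
  classical
  set i' : {i : Fin n // I.f i ∈ T} := ⟨i, hi⟩ with hi'
  refine ⟨fun y s => (C.mulVec y) i'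
    - ∑ j : ↥T, if h : j.1 ∈ I.χ i then A i' j * s ⟨j.1, h⟩ else 0, ?_⟩
  intro x
  have hAv : (A.mulVec fun j : ↥T => x j.1) i'
      = x (I.f i) + ∑ j : ↥T, (if h : j.1 ∈ I.χ i then A i' j * x j.1 else 0) := by
    have hpt : ∀ j : ↥T, A i' j * x j.1
        = (if j = (⟨I.f i, hi⟩ : ↥T) then x (I.f i) else 0)
          + (if h : j.1 ∈ I.χ i then A i' j * x j.1 else 0) := by
      intro j
      by_cases hj : j = (⟨I.f i, hi⟩ : ↥T)
      · subst hj
        have h1 : A i' ⟨I.f i, hi⟩ = 1 := hA.1 i'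
        have h2 : I.f i ∉ I.χ i := I.not_mem i
        simp [h1, h2]
      · by_cases hc : j.1 ∈ I.χ i
        · simp [hj, hc]
        · have hz : A i' j = 0 := hA.2 i' j hj hc
          simp [hj, hc, hz]
    simp only [Matrix.mulVec, dotProduct]
    rw [Finset.sum_congr rfl (fun j _ => hpt j), Finset.sum_add_distrib,
      Finset.sum_ite_eq' Finset.univ (⟨I.f i, hi⟩ : ↥T)]
    simp
  have hC : (C.mulVec (Gt.mulVec fun j : ↥T => x j.1)) i'
      = (A.mulVec fun j : ↥T => x j.1) i' := by
    rw [Matrix.mulVec_mulVec, ← hfact]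
  simp only [hC, hAv]
  ring

lemma pad_mulVec {K : Type*} [Field K] {m l : ℕ} {S T : Set (Fin m)} (hTS : T ⊆ S)
    (Gt : Matrix (Fin l) ↥T K) (x : Fin m → K) :
    Matrix.mulVec (fun (k : Fin l) (j : ↥S) => if h : j.1 ∈ T then Gt k ⟨j.1, h⟩ else 0)
      (fun j : ↥S => x j.1) = Gt.mulVec (fun j : ↥T => x j.1) := by
  classical
  funext k
  simp only [Matrix.mulVec, dotProduct]
  have hs := sum_pad (K := K) hTS
    (fun j => (if h : j ∈ T then Gt k ⟨j, h⟩ else 0) * x j)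
    (fun j _ hT => by simp [hT])
  calc ∑ j : ↥S, (if h : j.1 ∈ T then Gt k ⟨j.1, h⟩ else 0) * x j.1
      = ∑ j : ↥T, (if h : j.1 ∈ T then Gt k ⟨j.1, h⟩ else 0) * x j.1 := hs
    _ = ∑ j : ↥T, Gt k j * x j.1 := by
        refine Finset.sum_congr rfl fun j _ => ?_
        rw [dif_pos j.2]

lemma code_mem {K : Type*} [Field K] {m n : ℕ} (I : TGICP m n)
    (T1 T2 : Set (Fin m)) (hT1 : T1 ⊆ I.M1) (hT2 : T2 ⊆ I.M2)
    (hcov : ∀ j, j ∈ T1 ∨ j ∈ T2) :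
    (I.mrk K T1 + I.mrk K T2) ∈ {L | ∃ (l1 l2 : ℕ) (G1 : Matrix (Fin l1) ↥I.M1 K)
      (G2 : Matrix (Fin l2) ↥I.M2 K), I.IsCode K G1 G2 ∧ L = l1 + l2} := by
  classical
  obtain ⟨A1, hA1, hr1⟩ := minrk_attained (K := K)
    (fun i : {i : Fin n // I.f i ∈ T1} => (⟨I.f i.1, i.2⟩ : ↥T1))
    (fun i => {j : ↥T1 | j.1 ∈ I.χ i.1})
  obtain ⟨A2, hA2, hr2⟩ := minrk_attained (K := K)
    (fun i : {i : Fin n // I.f i ∈ T2} => (⟨I.f i.1, i.2⟩ : ↥T2))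
    (fun i => {j : ↥T2 | j.1 ∈ I.χ i.1})
  obtain ⟨G1t, C1, hf1⟩ := exists_row_factor A1
  obtain ⟨G2t, C2, hf2⟩ := exists_row_factor A2
  refine ⟨A1.rank, A2.rank,
    (fun k (j : ↥I.M1) => if h : j.1 ∈ T1 then G1t k ⟨j.1, h⟩ else 0),
    (fun k (j : ↥I.M2) => if h : j.1 ∈ T2 then G2t k ⟨j.1, h⟩ else 0), ?_, ?_⟩
  · intro i
    rcases hcov (I.f i) with hi | hi
    · obtain ⟨D, hD⟩ := decode_aux I T1 hA1 hf1 i hi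
      refine ⟨fun y1 _ s => D y1 s, fun x => ?_⟩
      rw [pad_mulVec hT1]
      exact hD x
    · obtain ⟨D, hD⟩ := decode_aux I T2 hA2 hf2 i hi
      refine ⟨fun _ y2 s => D y2 s, fun x => ?_⟩
      rw [pad_mulVec hT2]
      exact hD x
  · rw [hr1, hr2]; rfl

lemma sum_inst {α β : Type*} [AddCommMonoid β] {i1 i2 : Fintype α} (f : α → β) :
    @Finset.sum α β _ (@Finset.univ α i1) f = @Finset.sum α β _ (@Finset.univ α i2) f := by
  cases Subsingleton.elim i1 i2; rfl

lemma mrk_diff_le_l1 {K : Type*} [Field K] {m n : ℕ} (I : TGICP m n) {l1 l2 : ℕ}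
    {G1 : Matrix (Fin l1) ↥I.M1 K} {G2 : Matrix (Fin l2) ↥I.M2 K}
    (hc : I.IsCode K G1 G2) : I.mrk K (I.M1 \ I.M2) ≤ l1 := by
  classical
  refine @minrk_le_of_decoding K _ _ _ (@Subtype.fintype _ _ (fun a => Classical.propDecidable _) _) _ _ ?_ l1
    (fun k (j : ↥(I.M1 \ I.M2)) => G1 k ⟨j.1, j.2.1⟩) ?_
  · exact fun i => I.not_mem i.1
  intro i x hx0 hxχ
  obtain ⟨D, hD⟩ := hc i.1
  set xt : Fin m → K := fun j => if h : j ∈ I.M1 \ I.M2 then x ⟨j, h⟩ else 0 with hxt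
  have h0 := hD 0
  have z1 : (fun j : ↥I.M1 => (0 : Fin m → K) j.1) = (0 : ↥I.M1 → K) := rfl
  have z2 : (fun j : ↥I.M2 => (0 : Fin m → K) j.1) = (0 : ↥I.M2 → K) := rfl
  have z3 : (fun j : ↥(I.χ i.1) => (0 : Fin m → K) j.1) = (fun _ => (0 : K)) := rfl
  rw [z1, z2, z3, Matrix.mulVec_zero, Matrix.mulVec_zero] at h0
  have hx := hD xt
  have e2 : (fun j : ↥I.M2 => xt j.1) = (0 : ↥I.M2 → K) := by
    funext j
    have hj : j.1 ∉ I.M1 \ I.M2 := fun hj => hj.2 j.2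
    simp [hxt, hj]
  have e3 : (fun j : ↥(I.χ i.1) => xt j.1) = (fun _ => (0 : K)) := by
    funext j
    by_cases h : j.1 ∈ I.M1 \ I.M2
    · have hz := hxχ ⟨j.1, h⟩ j.2
      simp [hxt, h, hz]
    · simp only [hxt]
      exact dif_neg h
  have e1z : G1.mulVec (fun j : ↥I.M1 => xt j.1) = 0 := by
    funext k
    have hk := congrFun hx0 k
    simp only [Pi.zero_apply] at hk ⊢
    refine Eq.trans ?_ hk
    simp only [Matrix.mulVec, dotProduct]
    refine (Finset.sum_congr rfl fun j _ => ?_).trans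
      ((sum_pad (K := K) (show I.M1 \ I.M2 ⊆ I.M1 from fun j hj => hj.1)
        (fun j => (if h : j ∈ I.M1 then G1 k ⟨j, h⟩ else 0) * xt j)
        (fun j _ hT => by simp only [hxt]; rw [dif_neg hT, mul_zero])).trans
        ((sum_inst _).trans (Finset.sum_congr rfl fun j _ => ?_)))
    · rw [dif_pos j.2]
    · rw [dif_pos (j.2.1 : j.1 ∈ I.M1)]
      have hxj : xt j.1 = x j := by simp only [hxt]; exact dif_pos j.2
      rw [hxj]
  rw [e1z, e2, e3, Matrix.mulVec_zero, h0] at hx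
  have hxfi : xt (I.f i.1) = x ⟨I.f i.1, i.2⟩ := by simp only [hxt]; exact dif_pos i.2
  rw [hxfi] at hx
  exact hx.symm

lemma mrk_diff_le_l2 {K : Type*} [Field K] {m n : ℕ} (I : TGICP m n) {l1 l2 : ℕ}
    {G1 : Matrix (Fin l1) ↥I.M1 K} {G2 : Matrix (Fin l2) ↥I.M2 K}
    (hc : I.IsCode K G1 G2) : I.mrk K (I.M2 \ I.M1) ≤ l2 := by
  classical
  refine @minrk_le_of_decoding K _ _ _ (@Subtype.fintype _ _ (fun a => Classical.propDecidable _) _) _ _ ?_ l2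
    (fun k (j : ↥(I.M2 \ I.M1)) => G2 k ⟨j.1, j.2.1⟩) ?_
  · exact fun i => I.not_mem i.1
  intro i x hx0 hxχ
  obtain ⟨D, hD⟩ := hc i.1
  set xt : Fin m → K := fun j => if h : j ∈ I.M2 \ I.M1 then x ⟨j, h⟩ else 0 with hxt
  have h0 := hD 0
  have z1 : (fun j : ↥I.M1 => (0 : Fin m → K) j.1) = (0 : ↥I.M1 → K) := rfl
  have z2 : (fun j : ↥I.M2 => (0 : Fin m → K) j.1) = (0 : ↥I.M2 → K) := rfl
  have z3 : (fun j : ↥(I.χ i.1) => (0 : Fin m → K) j.1) = (fun _ => (0 : K)) := rfl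
  rw [z1, z2, z3, Matrix.mulVec_zero, Matrix.mulVec_zero] at h0
  have hx := hD xt
  have e2 : (fun j : ↥I.M1 => xt j.1) = (0 : ↥I.M1 → K) := by
    funext j
    have hj : j.1 ∉ I.M2 \ I.M1 := fun hj => hj.2 j.2
    simp [hxt, hj]
  have e3 : (fun j : ↥(I.χ i.1) => xt j.1) = (fun _ => (0 : K)) := by
    funext j
    by_cases h : j.1 ∈ I.M2 \ I.M1
    · have hz := hxχ ⟨j.1, h⟩ j.2
      simp [hxt, h, hz]
    · simp only [hxt]
      exact dif_neg h
  have e1z : G2.mulVec (fun j : ↥I.M2 => xt j.1) = 0 := by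
    funext k
    have hk := congrFun hx0 k
    simp only [Pi.zero_apply] at hk ⊢
    refine Eq.trans ?_ hk
    simp only [Matrix.mulVec, dotProduct]
    refine (Finset.sum_congr rfl fun j _ => ?_).trans
      ((sum_pad (K := K) (show I.M2 \ I.M1 ⊆ I.M2 from fun j hj => hj.1)
        (fun j => (if h : j ∈ I.M2 then G2 k ⟨j, h⟩ else 0) * xt j)
        (fun j _ hT => by simp only [hxt]; rw [dif_neg hT, mul_zero])).trans
        ((sum_inst _).trans (Finset.sum_congr rfl fun j _ => ?_)))
    · rw [dif_pos j.2]
    · rw [dif_pos (j.2.1 : j.1 ∈ I.M2)]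
      have hxj : xt j.1 = x j := by simp only [hxt]; exact dif_pos j.2
      rw [hxj]
  rw [e2, e1z, e3, Matrix.mulVec_zero, h0] at hx
  have hxfi : xt (I.f i.1) = x ⟨I.f i.1, i.2⟩ := by simp only [hxt]; exact dif_pos i.2
  rw [hxfi] at hx
  exact hx.symm


/-- Case II-B via joint extensions, part (ii).
Let `I` be a TGICP such that for each `i ∈ {1,2}` the SGICP `F̃_x^(i)` formed by the
receivers of `I_i` and `I_{12}` together (message set `P_i ∪ P_{12}`) satisfies
`mrk_q(F̃_x^(i)) = max mrk_i mrk_{12}`.  If `mrk_{12} ≤ max mrk_1 mrk_2`, then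
`l*_q(I) = mrk_1 + mrk_2`. -/
theorem stmt11 (K : Type*) [Field K] [Fintype K] {m n : ℕ} (I : TGICP m n)
    (h1 : I.mrk K ((I.M1 \ I.M2) ∪ (I.M1 ∩ I.M2)) =
      max (I.mrk K (I.M1 \ I.M2)) (I.mrk K (I.M1 ∩ I.M2)))
    (h2 : I.mrk K ((I.M2 \ I.M1) ∪ (I.M1 ∩ I.M2)) =
      max (I.mrk K (I.M2 \ I.M1)) (I.mrk K (I.M1 ∩ I.M2)))
    (hle : I.mrk K (I.M1 ∩ I.M2) ≤ max (I.mrk K (I.M1 \ I.M2)) (I.mrk K (I.M2 \ I.M1))) :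
    I.optLen K = I.mrk K (I.M1 \ I.M2) + I.mrk K (I.M2 \ I.M1) := by
  classical
  have hM1 : I.M1 \ I.M2 ∪ I.M1 ∩ I.M2 = I.M1 := Set.diff_union_inter _ _
  have hM2 : I.M2 \ I.M1 ∪ I.M1 ∩ I.M2 = I.M2 := by
    rw [Set.inter_comm]; exact Set.diff_union_inter _ _
  rw [hM1] at h1
  rw [hM2] at h2
  -- upper bound via code construction
  have hub : ∃ L ∈ {L | ∃ (l1 l2 : ℕ) (G1 : Matrix (Fin l1) ↥I.M1 K)
      (G2 : Matrix (Fin l2) ↥I.M2 K), I.IsCode K G1 G2 ∧ L = l1 + l2},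
      L ≤ I.mrk K (I.M1 \ I.M2) + I.mrk K (I.M2 \ I.M1) := by
    rcases le_total (I.mrk K (I.M2 \ I.M1)) (I.mrk K (I.M1 \ I.M2)) with hcase | hcase
    · have hcov : ∀ j, j ∈ I.M1 ∨ j ∈ I.M2 \ I.M1 := by
        intro j
        by_cases hj : j ∈ I.M1
        · exact Or.inl hj
        · refine Or.inr ⟨?_, hj⟩
          have : j ∈ I.M1 ∪ I.M2 := by rw [I.cover]; trivial
          exact this.resolve_left hj
      refine ⟨_, code_mem I I.M1 (I.M2 \ I.M1) subset_rfl Set.diff_subset hcov, ?_⟩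
      have hmax : I.mrk K I.M1 = I.mrk K (I.M1 \ I.M2) := by
        rw [h1]
        exact max_eq_left (le_trans hle (by rw [max_eq_left hcase]))
      rw [hmax]
    · have hcov : ∀ j, j ∈ I.M1 \ I.M2 ∨ j ∈ I.M2 := by
        intro j
        by_cases hj : j ∈ I.M2
        · exact Or.inr hj
        · refine Or.inl ⟨?_, hj⟩
          have : j ∈ I.M1 ∪ I.M2 := by rw [I.cover]; trivial
          exact this.resolve_right hj
      refine ⟨_, code_mem I (I.M1 \ I.M2) I.M2 Set.diff_subset subset_rfl hcov, ?_⟩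
      have hmax : I.mrk K I.M2 = I.mrk K (I.M2 \ I.M1) := by
        rw [h2]
        exact max_eq_left (le_trans hle (by rw [max_eq_right hcase]))
      rw [hmax]
  obtain ⟨L, hLmem, hLle⟩ := hub
  apply le_antisymm
  · exact le_trans (Nat.sInf_le hLmem) hLle
  · refine le_csInf ⟨L, hLmem⟩ ?_
    rintro b ⟨l1, l2, G1, G2, hc, rfl⟩
    exact add_le_add (mrk_diff_le_l1 I hc) (mrk_diff_le_l2 I hc)
end
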